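/- arXiv:1106.1526 — 6 statements merged into one kernel-verified Lean document; each statement's English description precedes it below -/
import Mathlib

section
/- Let K be a line-free closed convex set in ℝ^d and let L be a d-dimensional closed convex set in ℝ^d. Let R := R_L(K) and assume R ≠ ∅. Then for a point x ∈ ℝ^d the following are equivalent: (i) x is an extreme point of R; (ii) either x is an extreme point of K not lying in the interior of L, or there exists a one-dimensional face I of K such that I \ {x} consists of two connected components I₁ and I₂ satisfying I₁ ⊆ int(L) and I₂ ∩ L = ∅. -/
open Set Pointwise MeasureTheory ENNReal

noncomputable section

variable {E : Type*}

def lred [AddCommGroup E] [Module ℝ E] [TopologicalSpace E] (L K : Set E) : Set E :=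
  convexHull ℝ (K \ interior L)

def lclo [AddCommGroup E] [Module ℝ E] [TopologicalSpace E] (𝓛 : Set (Set E)) (K : Set E) : Set E :=
  ⋂ L ∈ 𝓛, lred L K

def lcloIter [AddCommGroup E] [Module ℝ E] [TopologicalSpace E] (𝓛 : Set (Set E)) : ℕ → Set E → Set E
  | 0, K => K
  | (i+1), K => lclo 𝓛 (lcloIter 𝓛 i K)

def recCone [AddCommGroup E] [Module ℝ E] (K : Set E) : Set E :=
  {y | ∀ x ∈ K, ∀ t : ℝ, 0 ≤ t → x + t • y ∈ K}

def linealSp [AddCommGroup E] [Module ℝ E] (K : Set E) : Set E :=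
  {y | ∀ x ∈ K, ∀ t : ℝ, x + t • y ∈ K}

def LineFree [AddCommGroup E] [Module ℝ E] (K : Set E) : Prop :=
  ∀ x v : E, v ≠ 0 → ¬ (∀ t : ℝ, x + t • v ∈ K)

def setDim [AddCommGroup E] [Module ℝ E] (s : Set E) : ℕ :=
  Module.finrank ℝ (vectorSpan ℝ s)

def IsFaceOf [AddCommGroup E] [Module ℝ E] (K F : Set E) : Prop :=
  Convex ℝ F ∧ IsExtreme ℝ K F

abbrev Euc (d : ℕ) := EuclideanSpace ℝ (Fin d)

def latticePts (d : ℕ) : Set (Euc d) := {x | ∀ i, ∃ z : ℤ, x i = (z : ℝ)}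

def IsRatPolyhedron (d : ℕ) (P : Set (Euc d)) : Prop :=
  ∃ (n : ℕ) (a : Fin n → Fin d → ℚ) (b : Fin n → ℚ), (∀ i, a i ≠ 0) ∧
    P = {x | ∀ i, ∑ j, (a i j : ℝ) * x j ≤ (b i : ℝ)}

def IsPolyhedron (d : ℕ) (P : Set (Euc d)) : Prop :=
  ∃ (n : ℕ) (a : Fin n → Euc d) (b : Fin n → ℝ), (∀ i, a i ≠ 0) ∧
    P = {x | ∀ i, (inner ℝ (a i) x : ℝ) ≤ b i}

def IsFacetOf (d : ℕ) (L F : Set (Euc d)) : Prop :=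
  IsFaceOf L F ∧ setDim F + 1 = d

def IsOuterNormalOf (d : ℕ) (L F : Set (Euc d)) (u : Euc d) : Prop :=
  F = {x | x ∈ L ∧ ∀ y ∈ L, (inner ℝ u y : ℝ) ≤ inner ℝ u x}

def primFacetNormals (d : ℕ) (L : Set (Euc d)) : Set (Euc d) :=
  {u | (∃ z : Fin d → ℤ, (∀ i, u i = (z i : ℝ)) ∧ Finset.univ.gcd z = 1) ∧
    ∃ F, IsFacetOf d L F ∧ IsOuterNormalOf d L F u}

def MaxFacetWidthLE (d : ℕ) (L : Set (Euc d)) (c : ℝ) : Prop :=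
  ∀ u ∈ primFacetNormals d L, ∀ x ∈ L, ∀ y ∈ L, (inner ℝ u x : ℝ) - inner ℝ u y ≤ c

/-!
An extreme point `x` of `R = conv (K \ int L)` lies in `K \ int L`. If `x` is not extreme in `K`,
separate it from the open convex set `int L` by a functional `f`, so `f < f x` on `int L`. A
direction `w` in which `x` can be moved both ways inside `K` must have `f w ≠ 0`: otherwise the
points `x ± ε w` of `K` avoid `int L`, lie in `R`, and have `x` as midpoint. So these directions
form a line and the smallest face `I` of `K` through `x` is an edge. Its half `{f > f x}` misses
`int L`, so by extremality its other half lies in `int L`, and convexity of `L` then forces the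
first half to miss `L`.

Conversely, if `I` is such an edge, the points of `K \ int L` on `I` lie on the closed half of `I`
beyond `x` towards `I₂`. As `I` is a face of `K`, `R ∩ I` is the convex hull of these points,
so `x`, an end point of that half, is extreme in `R`.
-/

namespace Convex

variable [AddCommGroup E] [Module ℝ E] {K : Set E} {x m p q r : E}

/-- The direction space of the smallest face of `K` containing `x`. -/
def faceDirection (hK : Convex ℝ K) (hx : x ∈ K) : Submodule ℝ E where
  carrier := {w | ∃ ε > 0, ∀ s : ℝ, |s| ≤ ε → x + s • w ∈ K}
  zero_mem' := ⟨1, one_pos, fun s _ => by simpa using hx⟩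
  add_mem' := by
    rintro w₁ w₂ ⟨ε₁, hε₁, h₁⟩ ⟨ε₂, hε₂, h₂⟩
    refine ⟨min ε₁ ε₂ / 2, by positivity, fun s hs => ?_⟩
    have hs₁ : |2 * s| ≤ ε₁ := by
      rw [abs_mul, abs_two]; linarith [min_le_left ε₁ ε₂]
    have hs₂ : |2 * s| ≤ ε₂ := by
      rw [abs_mul, abs_two]; linarith [min_le_right ε₁ ε₂]
    convert hK (h₁ _ hs₁) (h₂ _ hs₂) (by norm_num : (0 : ℝ) ≤ 1 / 2) (by norm_num : (0 : ℝ) ≤ 1 / 2)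
      (by norm_num) using 1
    module
  smul_mem' := by
    rintro c w ⟨ε, hε, h⟩
    refine ⟨ε / (|c| + 1), by positivity, fun s hs => ?_⟩
    rw [smul_smul]
    refine h _ ?_
    rw [abs_mul]
    calc |s| * |c| ≤ ε / (|c| + 1) * (|c| + 1) := by gcongr; linarith
      _ = ε := div_mul_cancel₀ _ (by positivity)

theorem sub_mem_faceDirection_of_mem_openSegment (hK : Convex ℝ K) (hp : p ∈ K) (hq : q ∈ K)
    (hm : m ∈ K) (hmpq : m ∈ openSegment ℝ p q) : q - p ∈ hK.faceDirection hm := by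
  obtain ⟨a, b, ha, hb, hab, rfl⟩ := hmpq
  refine ⟨min a b, lt_min ha hb, fun s hs => ?_⟩
  have hs' := abs_le.1 hs
  convert hK hp hq (by linarith [min_le_left a b]) (by linarith [min_le_right a b])
    (by rw [← hab]; ring : (a - s) + (b + s) = 1) using 1
  module

theorem faceDirection_le_of_mem_openSegment (hK : Convex ℝ K) (hr : r ∈ K) (hm : m ∈ K)
    (hx : x ∈ K) (hxrm : x ∈ openSegment ℝ r m) : hK.faceDirection hm ≤ hK.faceDirection hx := by
  obtain ⟨a, b, ha, hb, hab, rfl⟩ := hxrm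
  rintro w ⟨ε, hε, h⟩
  refine ⟨b * ε, by positivity, fun s hs => ?_⟩
  have hsb : |s / b| ≤ ε := by
    rw [abs_div, abs_of_pos hb, div_le_iff₀ hb, mul_comm]; exact hs
  convert hK hr (h _ hsb) ha.le hb.le hab using 1
  rw [smul_add, smul_smul, mul_div_cancel₀ _ hb.ne', add_assoc]

theorem faceDirection_le_of_sub_mem (hK : Convex ℝ K) (hx : x ∈ K) (hm : m ∈ K)
    (hmx : m - x ∈ hK.faceDirection hx) : hK.faceDirection hm ≤ hK.faceDirection hx := by
  obtain ⟨ε, hε, h⟩ := hmx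
  have hr : x + (-ε) • (m - x) ∈ K := h _ (by rw [abs_neg, abs_of_pos hε])
  refine hK.faceDirection_le_of_mem_openSegment hr hm hx
    ⟨1 / (1 + ε), ε / (1 + ε), by positivity, by positivity, by field_simp, ?_⟩
  match_scalars <;> field_simp; ring

theorem isExtreme_inter_mk'_faceDirection (hK : Convex ℝ K) (hx : x ∈ K) :
    IsExtreme ℝ K (K ∩ AffineSubspace.mk' x (hK.faceDirection hx)) := by
  refine ⟨inter_subset_left, fun p hp q hq m ⟨hm, hmx⟩ hmpq => ⟨hp, ?_⟩⟩
  rw [SetLike.mem_coe, AffineSubspace.mem_mk', vsub_eq_sub] at hmx ⊢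
  have hqp : q - p ∈ hK.faceDirection hx := hK.faceDirection_le_of_sub_mem hx hm hmx
    (hK.sub_mem_faceDirection_of_mem_openSegment hp hq hm hmpq)
  obtain ⟨a, b, -, -, hab, rfl⟩ := hmpq
  have hpx : p - x = (a • p + b • q - x) - b • (q - p) := by
    rw [eq_sub_of_add_eq' hab]; module
  rw [hpx]
  exact sub_mem hmx (Submodule.smul_mem _ _ hqp)

theorem exists_ne_zero_mem_faceDirection (hK : Convex ℝ K) (hx : x ∈ K)
    (hxK : x ∉ K.extremePoints ℝ) : ∃ v ∈ hK.faceDirection hx, v ≠ 0 := by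
  obtain ⟨p, hp, q, hq, hxpq, hpqx⟩ := by simpa [mem_extremePoints, hx] using hxK
  refine ⟨q - p, hK.sub_mem_faceDirection_of_mem_openSegment hp hq hx hxpq, sub_ne_zero.2 ?_⟩
  rintro rfl
  rw [openSegment_same, mem_singleton_iff] at hxpq
  exact hpqx hxpq.symm hxpq.symm

end Convex

section Hull

variable [AddCommGroup E] [Module ℝ E] {K F S : Set E} {x : E}

theorem IsExtreme.convexHull_inter_subset (hK : Convex ℝ K) (hF : IsExtreme ℝ K F) (hS : S ⊆ K) :
    convexHull ℝ S ∩ F ⊆ convexHull ℝ (S ∩ F) := by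
  have hSK : convexHull ℝ S ⊆ K := convexHull_min hS hK
  -- The hull of `S` lies in the convex set `T`, whose trace on `F` is the hull of `S ∩ F`.
  set T := convexHull ℝ (S ∩ F) ∪ (convexHull ℝ S \ F)
  have hTS : T ⊆ convexHull ℝ S := union_subset (convexHull_mono inter_subset_left) sdiff_subset
  have hTF : ∀ y ∈ T, y ∈ F → y ∈ convexHull ℝ (S ∩ F) := fun y hy hyF =>
    hy.resolve_right fun h => h.2 hyF
  have hT : Convex ℝ T := by
    refine convex_iff_openSegment_subset.2 fun p hp q hq m hm => ?_
    by_cases hmF : m ∈ F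
    · have hpF := hF.left_mem_of_mem_openSegment (hSK (hTS hp)) (hSK (hTS hq)) hmF hm
      have hqF := hF.right_mem_of_mem_openSegment (hSK (hTS hp)) (hSK (hTS hq)) hmF hm
      exact Or.inl ((convex_convexHull ℝ _).openSegment_subset (hTF p hp hpF) (hTF q hq hqF) hm)
    · exact Or.inr ⟨(convex_convexHull ℝ S).openSegment_subset (hTS hp) (hTS hq) hm, hmF⟩
  have hST : S ⊆ T := fun y hy => by
    by_cases hyF : y ∈ F
    · exact Or.inl (subset_convexHull ℝ _ ⟨hy, hyF⟩)
    · exact Or.inr ⟨subset_convexHull ℝ _ hy, hyF⟩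
  exact fun y ⟨hy, hyF⟩ => hTF y (convexHull_min hST hT hy) hyF

theorem IsExtreme.mem_extremePoints_convexHull (hK : Convex ℝ K) (hF : IsExtreme ℝ K F)
    (hS : S ⊆ K) (hxF : x ∈ F) (hx : x ∈ (convexHull ℝ (S ∩ F)).extremePoints ℝ) :
    x ∈ (convexHull ℝ S).extremePoints ℝ := by
  have hSK : convexHull ℝ S ⊆ K := convexHull_min hS hK
  refine ⟨convexHull_mono inter_subset_left hx.1, fun p hp q hq hxpq => hx.2 ?_ ?_ hxpq⟩
  · exact hF.convexHull_inter_subset hK hS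
      ⟨hp, hF.left_mem_of_mem_openSegment (hSK hp) (hSK hq) hxF hxpq⟩
  · exact hF.convexHull_inter_subset hK hS
      ⟨hq, hF.right_mem_of_mem_openSegment (hSK hp) (hSK hq) hxF hxpq⟩

end Hull

section Functional

variable [AddCommGroup E] [Module ℝ E] {I : Set E} {x y z : E} {g : E →ₗ[ℝ] ℝ}

theorem Convex.mem_openSegment_of_lt_of_lt (hI : Convex ℝ I)
    (hIg : ∀ w ∈ I, g w = g x → w = x) (hy : y ∈ I) (hz : z ∈ I) (hyx : g y < g x)
    (hxz : g x < g z) : x ∈ openSegment ℝ y z := by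
  have hzy : 0 < g z - g y := by linarith
  set a := (g z - g x) / (g z - g y)
  set b := (g x - g y) / (g z - g y)
  have ha : 0 < a := div_pos (by linarith) hzy
  have hb : 0 < b := div_pos (by linarith) hzy
  have hab : a + b = 1 := by rw [← add_div, div_eq_one_iff_eq hzy.ne']; ring
  refine ⟨a, b, ha, hb, hab, hIg _ (hI hy hz ha.le hb.le hab) ?_⟩
  simp only [map_add, map_smul, smul_eq_mul, a, b]
  field_simp
  ring

theorem mem_extremePoints_inter_le (hIg : ∀ w ∈ I, g w = g x → w = x) (hx : x ∈ I) :
    x ∈ (I ∩ {y | g x ≤ g y}).extremePoints ℝ := by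
  refine ⟨⟨hx, le_refl (g x)⟩, fun p ⟨hp, (hgp : g x ≤ g p)⟩ q ⟨_, (hgq : g x ≤ g q)⟩
    ⟨a, b, ha, hb, hab, hxpq⟩ => hIg p hp ?_⟩
  have hgx : a * g p + b * g q = g x := by
    rw [← hxpq, map_add, map_smul, map_smul, smul_eq_mul, smul_eq_mul]
  have h0 : a * (g p - g x) + b * (g q - g x) = 0 := by linear_combination hgx - g x * hab
  nlinarith [mul_nonneg hb.le (sub_nonneg.2 hgq)]

theorem Submodule.eq_span_singleton_of_disjoint_ker {D : Submodule ℝ E}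
    (hD : Disjoint D (LinearMap.ker g)) {v : E} (hv : v ∈ D) (hv0 : v ≠ 0) : D = ℝ ∙ v := by
  have hgv : g v ≠ 0 := fun h => hv0 (LinearMap.disjoint_ker.1 hD v hv h)
  refine le_antisymm (fun w hw => Submodule.mem_span_singleton.2 ⟨g w / g v, ?_⟩)
    ((Submodule.span_singleton_le_iff_mem v D).2 hv)
  have hz : g w • v - g v • w = 0 :=
    LinearMap.disjoint_ker.1 hD _ (D.sub_mem (D.smul_mem _ hv) (D.smul_mem _ hw))
      (by simp only [map_sub, map_smul, smul_eq_mul]; ring)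
  rw [sub_eq_zero] at hz
  rw [div_eq_inv_mul, mul_smul, hz, smul_smul, inv_mul_cancel₀ hgv, one_smul]

theorem eq_of_apply_eq_of_setDim_eq_one (hI : setDim I = 1) (hx : x ∈ I) (hy : y ∈ I)
    (hgy : g y ≠ g x) :
    ∀ w ∈ I, g w = g x → w = x := by
  intro w hw hgw
  have hyx : (⟨y -ᵥ x, vsub_mem_vectorSpan ℝ hy hx⟩ : vectorSpan ℝ I) ≠ 0 := by
    simpa [Subtype.ext_iff, sub_eq_zero] using fun h => hgy (congrArg g h)
  obtain ⟨c, hc⟩ :=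
    (finrank_eq_one_iff_of_nonzero' _ hyx).1 hI ⟨w -ᵥ x, vsub_mem_vectorSpan ℝ hw hx⟩
  have hc' : c • (y - x) = w - x := congrArg Subtype.val hc
  have hc0 : c * (g y - g x) = 0 := by
    rw [← smul_eq_mul, ← map_sub, ← map_smul, hc', map_sub, hgw, sub_self]
  rcases mul_eq_zero.1 hc0 with rfl | h
  · rw [zero_smul, eq_comm, sub_eq_zero] at hc'; exact hc'
  · exact absurd (sub_eq_zero.1 h) hgy

end Functional

theorem mem_of_connectedComponentIn_sdiff_singleton_ne [TopologicalSpace E] {I : Set E}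
    {x y z : E} (hI : IsPreconnected I) (hy : y ∈ I) (hz : z ∈ I)
    (hyz : connectedComponentIn (I \ {x}) y ≠ connectedComponentIn (I \ {x}) z) : x ∈ I := by
  by_contra hx
  rw [sdiff_singleton_eq_self hx, hI.connectedComponentIn hy, hI.connectedComponentIn hz] at hyz
  exact hyz rfl

section Topological

variable [AddCommGroup E] [Module ℝ E] [TopologicalSpace E] [IsTopologicalAddGroup E]
  [ContinuousSMul ℝ E] {S : Set E} {x y : E}

theorem Convex.connectedComponentIn_sdiff_singleton (hS : Convex ℝ S) (g : StrongDual ℝ E)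
    (hSg : ∀ w ∈ S, g w = g x → w = x) (hy : y ∈ S) (hxy : g x < g y) :
    connectedComponentIn (S \ {x}) y = S ∩ {w | g x < g w} := by
  have hsub : S ∩ {w | g x < g w} ⊆ S \ {x} := fun w hw =>
    ⟨hw.1, fun hwx => (hw.2 : g x < g w).ne (congrArg g hwx).symm⟩
  have hcover : S \ {x} ⊆ {w | g x < g w} ∪ {w | g w < g x} := fun w ⟨hw, hwx⟩ =>
    show g x < g w ∨ g w < g x from (Ne.symm fun h => hwx (hSg w hw h)).lt_or_gt
  refine Subset.antisymm ?_ ((hS.inter (convex_halfSpace_gt g.isLinear _)).isPreconnected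
    |>.subset_connectedComponentIn ⟨hy, hxy⟩ hsub)
  have hcomp := connectedComponentIn_subset (S \ {x}) y
  rcases isPreconnected_connectedComponentIn.subset_or_subset
      (isOpen_lt continuous_const g.continuous) (isOpen_lt g.continuous continuous_const)
      (disjoint_left.2 fun w (h₁ : g x < g w) h₂ => lt_asymm h₁ h₂) (hcomp.trans hcover)
    with h | h
  · exact subset_inter (hcomp.trans sdiff_subset) h
  · exact absurd (h (mem_connectedComponentIn ⟨hy, (hsub ⟨hy, hxy⟩).2⟩)) (lt_asymm hxy)

end Topological

def CrossesBoundaryAt [TopologicalSpace E] (L I : Set E) (x : E) : Prop :=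
  ∃ I₁ I₂ : Set E,
    I \ {x} = I₁ ∪ I₂ ∧ Disjoint I₁ I₂ ∧
    (∃ y ∈ I₁, I₁ = connectedComponentIn (I \ {x}) y) ∧
    (∃ y ∈ I₂, I₂ = connectedComponentIn (I \ {x}) y) ∧
    I₁ ⊆ interior L ∧ I₂ ∩ L = ∅

section Reduction

variable [AddCommGroup E] [Module ℝ E] [TopologicalSpace E] {K L I : Set E} {x y z : E}

theorem disjoint_faceDirection_ker_of_mem_extremePoints_lred (hK : Convex ℝ K)
    (hx : x ∈ (lred L K).extremePoints ℝ) (hxK : x ∈ K) (f : E →ₗ[ℝ] ℝ)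
    (hf : ∀ y ∈ interior L, f y < f x) : Disjoint (hK.faceDirection hxK) (LinearMap.ker f) := by
  refine LinearMap.disjoint_ker.2 fun w ⟨ε, hε, h⟩ hfw => ?_
  -- `f` is constant on the line through `x` in direction `w`, so that line avoids `interior L`.
  have hmem : ∀ s : ℝ, |s| ≤ ε → x + s • w ∈ lred L K := fun s hs =>
    subset_convexHull ℝ _ ⟨h s hs, fun hL => (hf _ hL).ne (by simp [hfw])⟩
  have hxpq : x ∈ openSegment ℝ (x + ε • w) (x + (-ε) • w) :=
    ⟨1 / 2, 1 / 2, by norm_num, by norm_num, by norm_num, by module⟩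
  have := hx.2 (hmem ε (abs_of_pos hε).le) (hmem (-ε) (by rw [abs_neg, abs_of_pos hε])) hxpq
  exact (smul_eq_zero.1 (add_eq_left.1 this)).resolve_left hε.ne'

variable [IsTopologicalAddGroup E] [ContinuousSMul ℝ E]

theorem crossesBoundaryAt_of_mem_extremePoints_lred (hL : Convex ℝ L)
    (hx : x ∈ (lred L K).extremePoints ℝ) (f : StrongDual ℝ E) (hf : ∀ y ∈ interior L, f y < f x)
    (hI : Convex ℝ I) (hIK : I ⊆ K) (hIf : ∀ w ∈ I, f w = f x → w = x) (hy : y ∈ I)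
    (hyx : f y < f x) (hz : z ∈ I) (hxz : f x < f z) : CrossesBoundaryAt L I x := by
  have hIf' : ∀ w ∈ I, (f : E →ₗ[ℝ] ℝ) w = f x → w = x := hIf
  have hI₁ : I ∩ {w | f w < f x} ⊆ interior L := by
    rintro w ⟨hw, hwx⟩
    by_contra hwL
    have hzL : z ∉ interior L := fun h => (hf z h).not_gt hxz
    have hwz := hx.2 (subset_convexHull ℝ _ ⟨hIK hw, hwL⟩) (subset_convexHull ℝ _ ⟨hIK hz, hzL⟩)
      (hI.mem_openSegment_of_lt_of_lt hIf' hw hz hwx hxz)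
    exact (hwx : f w < f x).ne (congrArg f hwz)
  refine ⟨I ∩ {w | f w < f x}, I ∩ {w | f x < f w}, ?_, ?_, ⟨y, ⟨hy, hyx⟩, ?_⟩,
    ⟨z, ⟨hz, hxz⟩, ?_⟩, hI₁, ?_⟩
  · ext w
    simp only [mem_sdiff, mem_singleton_iff, mem_union, mem_inter_iff, mem_ofPred_eq]
    constructor
    · rintro ⟨hw, hwx⟩
      exact (show f w ≠ f x from fun h => hwx (hIf w hw h)).lt_or_gt.imp (⟨hw, ·⟩) (⟨hw, ·⟩)
    · rintro (⟨hw, h⟩ | ⟨hw, h⟩) <;> exact ⟨hw, by rintro rfl; exact lt_irrefl _ h⟩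
  · exact disjoint_left.2 fun w ⟨_, h₁⟩ ⟨_, h₂⟩ => lt_asymm (α := ℝ) h₁ h₂
  · have := hI.connectedComponentIn_sdiff_singleton (-f) (by simpa using hIf) hy
      (by simpa using hyx)
    simpa using this.symm
  · exact (hI.connectedComponentIn_sdiff_singleton f hIf hz hxz).symm
  · refine eq_empty_of_forall_notMem fun w ⟨⟨hw, hxw⟩, hwL⟩ => (hf x ?_).false
    exact hL.openSegment_interior_closure_subset_interior (hI₁ ⟨hy, hyx⟩) (subset_closure hwL)
      (hI.mem_openSegment_of_lt_of_lt hIf' hy hw hyx hxw)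

theorem exists_crossing_edge_of_mem_extremePoints_lred (hK : Convex ℝ K) (hL : Convex ℝ L)
    (hx : x ∈ (lred L K).extremePoints ℝ) (hxK : x ∉ K.extremePoints ℝ) :
    ∃ I, IsFaceOf K I ∧ setDim I = 1 ∧ CrossesBoundaryAt L I x := by
  obtain ⟨hxK', hxL⟩ := extremePoints_convexHull_subset hx
  obtain ⟨v, hvD, hv0⟩ := hK.exists_ne_zero_mem_faceDirection hxK' hxK
  obtain ⟨f, hf⟩ := geometric_hahn_banach_open_point hL.interior isOpen_interior hxL
  set D := hK.faceDirection hxK'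
  have hD : Disjoint D (LinearMap.ker (f : E →ₗ[ℝ] ℝ)) :=
    disjoint_faceDirection_ker_of_mem_extremePoints_lred hK hx hxK' f hf
  set I := K ∩ AffineSubspace.mk' x D
  have hIf : ∀ w ∈ I, f w = f x → w = x := fun w hw hfw =>
    sub_eq_zero.1 (LinearMap.disjoint_ker.1 hD _ hw.2 (by simp [hfw]))
  obtain ⟨ε, hε, hxv⟩ := id hvD
  have hmem : ∀ s : ℝ, |s| ≤ ε → x + s • v ∈ I := fun s hs =>
    ⟨hxv s hs, by simpa using D.smul_mem s hvD⟩
  have hvI : v ∈ vectorSpan ℝ I := by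
    have := vsub_mem_vectorSpan ℝ (hmem ε (abs_of_pos hε).le) (hmem 0 (by simp [hε.le]))
    simpa [hε.ne'] using Submodule.smul_mem _ ε⁻¹ this
  have hdim : setDim I = 1 := by
    rw [setDim, le_antisymm ((vectorSpan_mono ℝ inter_subset_right).trans
      ((AffineSubspace.direction_mk' x D).trans_le
        (Submodule.eq_span_singleton_of_disjoint_ker hD hvD hv0).le))
      ((Submodule.span_singleton_le_iff_mem _ _).2 hvI), finrank_span_singleton hv0]
  have hI : Convex ℝ I := hK.inter (AffineSubspace.convex _)
  have hfv : f v ≠ 0 := fun h => hv0 (LinearMap.disjoint_ker.1 hD v hvD h)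
  have hε₁ : |ε| ≤ ε := (abs_of_pos hε).le
  have hε₂ : |-ε| ≤ ε := by rw [abs_neg]; exact hε₁
  have hfs : ∀ s : ℝ, f (x + s • v) - f x = s * f v := fun s => by simp
  obtain ⟨y, hy, hyx, z, hz, hxz⟩ : ∃ y ∈ I, f y < f x ∧ ∃ z ∈ I, f x < f z := by
    rcases hfv.lt_or_gt with h | h
    · exact ⟨_, hmem ε hε₁, by nlinarith [hfs ε], _, hmem (-ε) hε₂, by nlinarith [hfs (-ε)]⟩
    · exact ⟨_, hmem (-ε) hε₂, by nlinarith [hfs (-ε)], _, hmem ε hε₁, by nlinarith [hfs ε]⟩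
  exact ⟨I, ⟨hI, hK.isExtreme_inter_mk'_faceDirection hxK'⟩, hdim,
    crossesBoundaryAt_of_mem_extremePoints_lred hL hx f hf hI inter_subset_left hIf hy hyx hz hxz⟩

theorem mem_extremePoints_lred_of_crossesBoundaryAt [LocallyConvexSpace ℝ E] [T1Space E]
    (hK : Convex ℝ K) (hI : IsFaceOf K I) (hdim : setDim I = 1)
    (hcross : CrossesBoundaryAt L I x) : x ∈ (lred L K).extremePoints ℝ := by
  obtain ⟨hIc, hIK⟩ := hI
  obtain ⟨I₁, I₂, hsplit, hdisj, ⟨y₁, hy₁, hI₁⟩, ⟨y₂, hy₂, hI₂⟩, hI₁L, hI₂L⟩ := hcross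
  have hy₁I : y₁ ∈ I \ {x} := hsplit ▸ Or.inl hy₁
  have hy₂I : y₂ ∈ I \ {x} := hsplit ▸ Or.inr hy₂
  have hxI : x ∈ I := mem_of_connectedComponentIn_sdiff_singleton_ne hIc.isPreconnected hy₁I.1
    hy₂I.1 fun h => disjoint_left.1 hdisj hy₁ (by rwa [hI₂, ← h, ← hI₁])
  obtain ⟨g, hg⟩ := geometric_hahn_banach_point_point (Ne.symm hy₂I.2)
  have hIg : ∀ w ∈ I, g w = g x → w = x := eq_of_apply_eq_of_setDim_eq_one hdim hxI hy₂I.1 hg.ne'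
  have hI₂g : I₂ = I ∩ {w | g x < g w} :=
    hI₂.trans (hIc.connectedComponentIn_sdiff_singleton g hIg hy₂I.1 hg)
  have hxL : x ∉ interior L := by
    have hseg : openSegment ℝ x y₂ ⊆ I₂ := by
      rintro w ⟨a, b, ha, hb, hab, rfl⟩
      refine hI₂g ▸ ⟨hIc.openSegment_subset hxI hy₂I.1 ⟨a, b, ha, hb, hab, rfl⟩, ?_⟩
      show g x < g (a • x + b • y₂)
      rw [map_add, map_smul, map_smul, smul_eq_mul, smul_eq_mul]
      have hax : a * g x = g x - b * g x := by linear_combination g x * hab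
      linarith [mul_lt_mul_of_pos_left hg hb]
    rw [← mem_compl_iff, ← closure_compl]
    refine closure_mono (fun w hw hwL => ?_) (closure_mono hseg
      (segment_subset_closure_openSegment (left_mem_segment ℝ x y₂)))
    exact (hI₂L ▸ ⟨hw, hwL⟩ : w ∈ (∅ : Set E))
  have hSI : (K \ interior L) ∩ I ⊆ I ∩ {w | g x ≤ g w} := by
    rintro w ⟨⟨-, hwL⟩, hw⟩
    refine ⟨hw, show g x ≤ g w from not_lt.1 fun hwx => hwL (hI₁L ?_)⟩
    have : w ∈ I₁ ∪ I₂ := hsplit ▸ ⟨hw, fun h => hwx.ne (congrArg g h)⟩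
    exact this.resolve_right fun h => lt_asymm hwx (hI₂g ▸ h).2
  refine hIK.mem_extremePoints_convexHull hK sdiff_subset hxI ?_
  exact inter_extremePoints_subset_extremePoints_of_subset
    (convexHull_min hSI (hIc.inter (convex_halfSpace_ge g.isLinear _)))
    ⟨subset_convexHull ℝ _ ⟨⟨hIK.subset hxI, hxL⟩, hxI⟩, mem_extremePoints_inter_le hIg hxI⟩

end Reduction

theorem stmt0_general (d : ℕ) (K L : Set (Euc d))
    (hKcv : Convex ℝ K)
    (hLcv : Convex ℝ L)
    (x : Euc d) :
    x ∈ (lred L K).extremePoints ℝ ↔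
      (x ∈ K.extremePoints ℝ \ interior L ∨
        ∃ I : Set (Euc d), IsFaceOf K I ∧ setDim I = 1 ∧
          ∃ I₁ I₂ : Set (Euc d),
            I \ {x} = I₁ ∪ I₂ ∧ Disjoint I₁ I₂ ∧
            (∃ y ∈ I₁, I₁ = connectedComponentIn (I \ {x}) y) ∧
            (∃ y ∈ I₂, I₂ = connectedComponentIn (I \ {x}) y) ∧
            I₁ ⊆ interior L ∧ I₂ ∩ L = ∅) := by
  constructor
  · intro hx
    by_cases hxK : x ∈ K.extremePoints ℝ
    · exact Or.inl ⟨hxK, (extremePoints_convexHull_subset hx).2⟩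
    · exact Or.inr (exists_crossing_edge_of_mem_extremePoints_lred hKcv hLcv hx hxK)
  · rintro (⟨hxK, hxL⟩ | ⟨I, hI, hdim, hcross⟩)
    · exact inter_extremePoints_subset_extremePoints_of_subset (convexHull_min sdiff_subset hKcv)
        ⟨subset_convexHull ℝ _ ⟨hxK.1, hxL⟩, hxK⟩
    · exact mem_extremePoints_lred_of_crossesBoundaryAt hKcv hI hdim hcross

/-- Theorem: Properties of L-reductions, Part I.
Let `K` be a line-free closed convex set in `ℝ^d` and `L` a `d`-dimensional closed convex
set in `ℝ^d`. If `R := R_L(K)` is nonempty, then `x` is an extreme point of `R` iff either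
`x` is an extreme point of `K` not in the interior of `L`, or there is a one-dimensional
face `I` of `K` such that `I \ {x}` consists of two connected components `I₁`, `I₂` with
`I₁ ⊆ int L` and `I₂ ∩ L = ∅`. -/
theorem stmt0 (d : ℕ) (K L : Set (Euc d))
    (hKcl : IsClosed K) (hKcv : Convex ℝ K) (hKlf : LineFree K)
    (hLcl : IsClosed L) (hLcv : Convex ℝ L) (hLdim : setDim L = d)
    (hne : (lred L K).Nonempty) (x : Euc d) :
    x ∈ (lred L K).extremePoints ℝ ↔
      (x ∈ K.extremePoints ℝ \ interior L ∨
        ∃ I : Set (Euc d), IsFaceOf K I ∧ setDim I = 1 ∧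
          ∃ I₁ I₂ : Set (Euc d),
            I \ {x} = I₁ ∪ I₂ ∧ Disjoint I₁ I₂ ∧
            (∃ y ∈ I₁, I₁ = connectedComponentIn (I \ {x}) y) ∧
            (∃ y ∈ I₂, I₂ = connectedComponentIn (I \ {x}) y) ∧
            I₁ ⊆ interior L ∧ I₂ ∩ L = ∅) :=
  stmt0_general d K L hKcv hLcv x
end
end

section
/- Let 𝓛 be a nonempty class of d-dimensional closed convex sets in ℝ^d such that for every L ∈ 𝓛 the set rec(L) is a linear space, and let M := ℝ^d \ ⋃_{L∈𝓛} int(L). Then for every line-free closed convex set K in ℝ^d one has ⋂_{i=0}^{∞} R_𝓛^i(K) = conv(K ∩ M) + rec(K). -/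
/-!
Let `C := ⋂ᵢ closure R_𝓛^i(K)`. Every `R_𝓛^i(K)` contains `conv(K ∩ M) + rec K`: for
`c ∈ conv(K ∩ M)`, `y ∈ rec K` and `L ∈ 𝓛`, either `y` lies in the linear space `rec L`, and then
translating by `y` keeps points of `K ∩ M` outside `int L`, or the ray `c + ℝ≥0 y` leaves `L`, and
`c + y` lies on a segment from `c` to a point outside `L`.

Conversely, `C` is closed, convex and line-free, hence `C = conv(ext C) + rec C` (Klee's extension
of Minkowski's theorem). An extreme point `e` of `C` cannot lie in `int L` for `L ∈ 𝓛`: points of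
`R_L(R_𝓛^i(K))` close to `e` are convex combinations of points of `R_𝓛^i(K)` on a small sphere
around them, and a compactness argument then writes `e` as a convex combination of points of `C`
away from `e`. So `ext C ⊆ K ∩ M` and `rec C ⊆ rec K`.
-/

open Set Pointwise MeasureTheory ENNReal

noncomputable section

variable {E : Type*}

section Module

variable [AddCommGroup E] [Module ℝ E] {K : Set E} {x y z : E}

lemma zero_mem_recCone (K : Set E) : (0 : E) ∈ recCone K := by
  intro x hx t _
  simpa using hx

lemma add_mem_recCone (hy : y ∈ recCone K) (hz : z ∈ recCone K) : y + z ∈ recCone K := by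
  intro x hx t ht
  simpa [smul_add, add_assoc] using hz _ (hy x hx t ht) t ht

lemma smul_mem_recCone (hy : y ∈ recCone K) {c : ℝ} (hc : 0 ≤ c) : c • y ∈ recCone K := by
  intro x hx t ht
  simpa [mul_smul] using hy x hx (t * c) (mul_nonneg ht hc)

lemma convex_recCone (K : Set E) : Convex ℝ (recCone K) :=
  fun _ hy _ hz _ _ ha hb _ => add_mem_recCone (smul_mem_recCone hy ha) (smul_mem_recCone hz hb)

lemma add_mem_add_recCone {S : Set E} (hx : x ∈ S + recCone K) (hy : y ∈ recCone K) :
    x + y ∈ S + recCone K := by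
  obtain ⟨a, ha, b, hb, rfl⟩ := hx
  exact ⟨a, ha, b + y, add_mem_recCone hb hy, (add_assoc a b y).symm⟩

lemma add_mem_of_mem_recCone (hx : x ∈ K) (hy : y ∈ recCone K) : x + y ∈ K := by
  simpa using hy x hx 1 zero_le_one

lemma LineFree.mono {C : Set E} (hK : LineFree K) (hCK : C ⊆ K) : LineFree C :=
  fun x v hv hline => hK x v hv fun t => hCK (hline t)

lemma LineFree.not_forall_add_smul_neg_mem (hK : LineFree K) {v : E} (hv : v ≠ 0)
    (h : ∀ t : ℝ, 0 ≤ t → x + t • v ∈ K) : ¬∀ t : ℝ, 0 ≤ t → x + t • -v ∈ K := by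
  refine fun h' => hK x v hv fun t => ?_
  rcases le_total 0 t with ht | ht
  · exact h t ht
  · simpa using h' (-t) (neg_nonneg.2 ht)

lemma Convex.mem_of_add_smul_mem_of_add_smul_neg_mem {Q : Set E} (hQ : Convex ℝ Q) {v : E}
    {a b : ℝ} (ha : 0 ≤ a) (hb : 0 ≤ b) (h₁ : x + a • v ∈ Q) (h₂ : x + b • -v ∈ Q) : x ∈ Q := by
  rcases (add_nonneg ha hb).eq_or_lt with hab | hab
  · obtain rfl : a = 0 := by linarith
    simpa using h₁
  convert hQ h₁ h₂ (div_nonneg hb hab.le) (div_nonneg ha hab.le)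
    (by rw [← add_div, add_comm, div_self hab.ne']) using 1
  match_scalars <;> field_simp <;> ring

end Module

section TopologicalVectorSpace

open Filter Topology

variable [AddCommGroup E] [Module ℝ E] [TopologicalSpace E] {C K L : Set E} {x v : E}

lemma lclo_subset (𝓛 : Set (Set E)) (hL : L ∈ 𝓛) (hK : Convex ℝ K) : lclo 𝓛 K ⊆ K :=
  (biInter_subset_of_mem hL).trans (convexHull_min sdiff_subset hK)

lemma convex_lcloIter (𝓛 : Set (Set E)) (hK : Convex ℝ K) : ∀ i, Convex ℝ (lcloIter 𝓛 i K)
  | 0 => hK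
  | _ + 1 => convex_iInter₂ fun _ _ => convex_convexHull ℝ _

lemma lcloIter_antitone {𝓛 : Set (Set E)} (hL : L ∈ 𝓛) (hK : Convex ℝ K) :
    Antitone fun i => lcloIter 𝓛 i K :=
  antitone_nat_of_succ_le fun i => lclo_subset 𝓛 hL (convex_lcloIter 𝓛 hK i)

variable [IsTopologicalAddGroup E]

lemma add_mem_interior_of_mem_recCone (hx : x ∈ interior L) (hv : v ∈ recCone L) :
    x + v ∈ interior L := by
  have hsub : v +ᵥ L ⊆ L := by
    rintro _ ⟨y, hy, rfl⟩
    show v + y ∈ L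
    rw [add_comm]
    exact add_mem_of_mem_recCone hy hv
  have : v +ᵥ x ∈ interior (v +ᵥ L) := by
    rw [interior_vadd]; exact vadd_mem_vadd_set hx
  simpa [add_comm] using interior_mono hsub this

variable [ContinuousSMul ℝ E]

lemma mem_recCone_of_forall_add_smul_mem (hC : IsClosed C) (hCc : Convex ℝ C)
    (h : ∀ t : ℝ, 0 ≤ t → x + t • v ∈ C) : v ∈ recCone C := by
  intro y hy t ht
  -- `y + t • v` is the limit of points of the segments from `y` to `x + s • v` as `s → ∞`
  have hlim : Tendsto (fun s : ℝ => y + t • v + (t / s) • (x - y)) atTop (𝓝 (y + t • v)) := by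
    simpa using tendsto_const_nhds.add
      (((tendsto_const_nhds (x := t)).div_atTop tendsto_id).smul_const (x - y))
  refine hC.mem_of_tendsto hlim ?_
  filter_upwards [eventually_ge_atTop t, eventually_gt_atTop 0] with s hts hs
  have hmem := hCc hy (h s hs.le) (sub_nonneg.2 ((div_le_one hs).2 hts)) (div_nonneg ht hs.le)
    (sub_add_cancel 1 (t / s))
  convert hmem using 1
  rw [smul_add, smul_smul, div_mul_cancel₀ t hs.ne']
  module

lemma recCone_subset_recCone (hK : IsClosed K) (hKc : Convex ℝ K) (hCK : C ⊆ K)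
    (hC : C.Nonempty) : recCone C ⊆ recCone K := by
  obtain ⟨x, hx⟩ := hC
  exact fun v hv => mem_recCone_of_forall_add_smul_mem hK hKc fun t ht => hCK (hv x hx t ht)

lemma exists_add_smul_mem_forall_lt_notMem (hC : IsClosed C) (hCc : Convex ℝ C) (hx : x ∈ C)
    (h : ¬∀ t : ℝ, 0 ≤ t → x + t • v ∈ C) :
    ∃ r : ℝ, 0 ≤ r ∧ x + r • v ∈ C ∧ ∀ s, r < s → x + s • v ∉ C := by
  set I := {t : ℝ | 0 ≤ t ∧ x + t • v ∈ C}
  have hI : IsClosed I := isClosed_Ici.inter (hC.preimage (by fun_prop))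
  obtain ⟨t₀, ht₀, hxt₀⟩ : ∃ t₀ : ℝ, 0 ≤ t₀ ∧ x + t₀ • v ∉ C := by
    simpa only [not_forall, exists_prop] using h
  have hbdd : BddAbove I := by
    refine ⟨t₀, fun t ⟨ht, hxt⟩ => le_of_not_gt fun hlt => hxt₀ ?_⟩
    have := hCc.add_smul_mem hx (by simpa using hxt) (t := t₀ / t)
      ⟨div_nonneg ht₀ (ht₀.trans hlt.le), (div_le_one (ht₀.trans_lt hlt)).2 hlt.le⟩
    rwa [smul_smul, div_mul_cancel₀ _ (ht₀.trans_lt hlt).ne'] at this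
  have hrI := hI.csSup_mem ⟨0, le_rfl, by simpa using hx⟩ hbdd
  exact ⟨sSup I, hrI.1, hrI.2, fun s hs hxs =>
    (le_csSup hbdd ⟨hrI.1.trans hs.le, hxs⟩).not_gt hs⟩

lemma IsExtreme.convexHull_extremePoints_add_recCone_subset {F : Set E} (hCF : IsExtreme ℝ C F)
    (hC : IsClosed C) (hCc : Convex ℝ C) (hF : F.Nonempty) :
    convexHull ℝ (F.extremePoints ℝ) + recCone F ⊆ convexHull ℝ (C.extremePoints ℝ) + recCone C :=
  add_subset_add (convexHull_mono hCF.extremePoints_subset_extremePoints)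
    (recCone_subset_recCone hC hCc hCF.1 hF)

lemma LineFree.mem_of_endpoints_mem (hCl : LineFree C) (hC : IsClosed C) (hCc : Convex ℝ C)
    {S : Set E} (hS : Convex ℝ S) (hx : x ∈ C) (hv : v ≠ 0)
    (hend : ∀ y ∈ C, ∀ w ∈ ({v, -v} : Set E), (∀ t : ℝ, 0 < t → y + t • w ∉ C) →
      y ∈ S + recCone C) :
    x ∈ S + recCone C := by
  have hray : ∀ w ∈ ({v, -v} : Set E), (¬∀ t : ℝ, 0 ≤ t → x + t • w ∈ C) →
      ∃ r : ℝ, 0 ≤ r ∧ x + r • w ∈ S + recCone C := by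
    intro w hw h
    obtain ⟨r, hr, hrC, hrout⟩ := exists_add_smul_mem_forall_lt_notMem hC hCc hx h
    refine ⟨r, hr, hend _ hrC w hw fun t ht hmem => hrout (r + t) (by linarith) ?_⟩
    rwa [add_smul, ← add_assoc]
  by_cases h₁ : ∀ t : ℝ, 0 ≤ t → x + t • v ∈ C
  · obtain ⟨r, hr, hrQ⟩ := hray (-v) (Or.inr rfl) (hCl.not_forall_add_smul_neg_mem hv h₁)
    simpa using add_mem_add_recCone hrQ
      (smul_mem_recCone (mem_recCone_of_forall_add_smul_mem hC hCc h₁) hr)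
  by_cases h₂ : ∀ t : ℝ, 0 ≤ t → x + t • -v ∈ C
  · obtain ⟨r, hr, hrQ⟩ := hray v (Or.inl rfl)
      (by simpa using hCl.not_forall_add_smul_neg_mem (neg_ne_zero.2 hv) h₂)
    simpa using add_mem_add_recCone hrQ
      (smul_mem_recCone (mem_recCone_of_forall_add_smul_mem hC hCc h₂) hr)
  obtain ⟨a, ha, haQ⟩ := hray v (Or.inl rfl) h₁
  obtain ⟨b, hb, hbQ⟩ := hray (-v) (Or.inr rfl) h₂
  exact (hS.add (convex_recCone C)).mem_of_add_smul_mem_of_add_smul_neg_mem ha hb haQ hbQ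

lemma convexHull_add_recCone_subset_lred {N P : Set E} (hL : IsClosed L)
    (hLc : Convex ℝ L) (hLrec : ∀ y ∈ recCone L, -y ∈ recCone L) (hNL : Disjoint N (interior L))
    (hNP : convexHull ℝ N + recCone K ⊆ P) : convexHull ℝ N + recCone K ⊆ lred L P := by
  rintro _ ⟨c, hc, y, hy, rfl⟩
  have hNP' : N ⊆ P \ interior L := fun n hn =>
    ⟨hNP ⟨n, subset_convexHull ℝ N hn, 0, zero_mem_recCone K, add_zero n⟩,
      hNL.notMem_of_mem_left hn⟩
  by_cases hyL : y ∈ recCone L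
  · -- translating by `y` preserves the complement of `interior L`, as `-y ∈ recCone L`
    have hNy : N + {y} ⊆ P \ interior L := by
      rw [add_singleton]
      rintro _ ⟨n, hn, rfl⟩
      refine ⟨hNP ⟨n, subset_convexHull ℝ N hn, y, hy, rfl⟩, fun hny =>
        hNL.notMem_of_mem_left hn ?_⟩
      simpa using add_mem_interior_of_mem_recCone hny (hLrec y hyL)
    refine convexHull_mono hNy ?_
    rw [convexHull_add, convexHull_singleton]
    exact add_mem_add hc rfl
  · obtain ⟨T, hT, hcT⟩ : ∃ T : ℝ, 1 ≤ T ∧ c + T • y ∉ L := by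
      by_contra! hcon
      refine hyL (mem_recCone_of_forall_add_smul_mem hL hLc (x := c + y) fun t ht => ?_)
      simpa [add_smul, add_assoc] using hcon (1 + t) (by linarith)
    have hT0 : 0 < T := one_pos.trans_le hT
    have hend : c + T • y ∈ lred L P := subset_convexHull ℝ _
      ⟨hNP ⟨c, hc, T • y, smul_mem_recCone hy hT0.le, rfl⟩, fun h => hcT (interior_subset h)⟩
    have := (convex_convexHull ℝ _).add_smul_mem (convexHull_mono hNP' hc) hend
      ⟨inv_nonneg.2 hT0.le, inv_le_one_of_one_le₀ hT⟩
    rwa [smul_smul, inv_mul_cancel₀ hT0.ne', one_smul] at this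

lemma convexHull_add_recCone_subset_lcloIter {𝓛 : Set (Set E)} {N : Set E}
    (h𝓛 : ∀ L ∈ 𝓛, IsClosed L ∧ Convex ℝ L ∧ ∀ y ∈ recCone L, -y ∈ recCone L)
    (hNK : N ⊆ K) (hN𝓛 : ∀ L ∈ 𝓛, Disjoint N (interior L)) (hK : Convex ℝ K) :
    ∀ i, convexHull ℝ N + recCone K ⊆ lcloIter 𝓛 i K
  | 0 => by
    rintro _ ⟨c, hc, y, hy, rfl⟩
    exact add_mem_of_mem_recCone (convexHull_min hNK hK hc) hy
  | i + 1 => subset_iInter₂ fun L hL =>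
    have ⟨hLcl, hLc, hLrec⟩ := h𝓛 L hL
    convexHull_add_recCone_subset_lred hLcl hLc hLrec (hN𝓛 L hL)
      (convexHull_add_recCone_subset_lcloIter h𝓛 hNK hN𝓛 hK i)

end TopologicalVectorSpace

section NormedSpace

open Module

variable [NormedAddCommGroup E] [NormedSpace ℝ E]

lemma mem_convexHull_inter_sphere {D s : Set E} {p : E} {r : ℝ} (hD : Convex ℝ D) (hsD : s ⊆ D)
    (hp : p ∈ D) (hr : 0 < r) (hs : ∀ x ∈ s, r ≤ dist x p) (hps : p ∈ convexHull ℝ s) :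
    p ∈ convexHull ℝ (D ∩ Metric.sphere p r) := by
  set T := convexHull ℝ (D ∩ Metric.sphere p r)
  have hT : Convex ℝ (-p +ᵥ T) := (convex_convexHull ℝ _).vadd (-p)
  -- every point of `s` lies on a ray from `p` through a point of `T`
  have hsT : -p +ᵥ s ⊆ ConvexCone.hull ℝ (-p +ᵥ T) := by
    rintro _ ⟨x, hx, rfl⟩
    have hxp : 0 < dist x p := hr.trans_le (hs x hx)
    rw [SetLike.mem_coe, ConvexCone.mem_hull_of_convex hT]
    refine ⟨dist x p / r, div_pos hxp hr, ?_⟩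
    rw [dist_eq_norm] at hxp ⊢
    refine ⟨-p +ᵥ (p + (r / ‖x - p‖) • (x - p)), ⟨_, subset_convexHull ℝ _ ⟨?_, ?_⟩, rfl⟩, ?_⟩
    · exact hD.add_smul_sub_mem hp (hsD hx)
        ⟨div_nonneg hr.le hxp.le, (div_le_one hxp).2 (dist_eq_norm x p ▸ hs x hx)⟩
    · rw [mem_sphere_iff_norm, add_sub_cancel_left, norm_smul, Real.norm_of_nonneg
        (div_nonneg hr.le hxp.le), div_mul_cancel₀ r hxp.ne']
    · change (‖x - p‖ / r) • (-p + (p + _)) = -p + x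
      rw [neg_add_cancel_left, smul_smul, div_mul_div_cancel₀ hr.ne',
        div_self hxp.ne', one_smul, neg_add_eq_sub]
  have h0 : (0 : E) ∈ ConvexCone.hull ℝ (-p +ᵥ T) := by
    refine convexHull_min hsT (ConvexCone.convex _) ?_
    rw [convexHull_vadd]
    exact ⟨p, hps, neg_add_cancel p⟩
  obtain ⟨c, hc, y, ⟨t, ht, rfl⟩, hcy⟩ := (ConvexCone.mem_hull_of_convex hT).1 h0
  rw [smul_eq_zero] at hcy
  exact neg_add_eq_zero.1 (hcy.resolve_left hc.ne') ▸ ht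

lemma mem_convexHull_inter_annulus_of_mem_lred {D L : Set E} {e q : E} {ε : ℝ} (hD : Convex ℝ D)
    (hqD : q ∈ D) (hqL : q ∈ lred L D) (hball : Metric.ball e ε ⊆ interior L)
    (hqe : dist q e < ε / 4) :
    q ∈ convexHull ℝ (D ∩ (Metric.closedBall e (3 * ε / 4) \ Metric.ball e (ε / 4))) := by
  have hε : 0 < ε := by linarith [dist_nonneg (x := q) (y := e)]
  refine convexHull_mono ?_ (mem_convexHull_inter_sphere hD sdiff_subset hqD
    (by positivity : 0 < ε / 2) (fun x hx => ?_) hqL)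
  · rintro y ⟨hy, hyq⟩
    rw [Metric.mem_sphere] at hyq
    refine ⟨hy, ?_, ?_⟩
    · rw [Metric.mem_closedBall]
      linarith [dist_triangle y q e]
    · rw [Metric.mem_ball, not_lt]
      linarith [dist_triangle y e q, dist_comm q e]
  · have : ε ≤ dist x e := not_lt.1 fun h => hx.2 (hball h)
    linarith [dist_triangle x q e]

variable [FiniteDimensional ℝ E]

-- Carathéodory: every point of the hull is a convex combination of `finrank ℝ E + 1` points
lemma isCompact_convexHull {s : Set E} (hs : IsCompact s) : IsCompact (convexHull ℝ s) := by
  have hhull : convexHull ℝ s = ⋃ k : Fin (finrank ℝ E + 2),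
      (fun p : (Fin k → ℝ) × (Fin k → E) => ∑ i, p.1 i • p.2 i) ''
        (stdSimplex ℝ (Fin k) ×ˢ univ.pi fun _ => s) := by
    refine subset_antisymm (fun x hx => ?_) (iUnion_subset fun k => ?_)
    · obtain ⟨ι, _, z, w, hzs, hind, hw0, hw1, rfl⟩ := eq_pos_convex_span_of_mem_convexHull hx
      have hcard : Fintype.card ι < finrank ℝ E + 2 := Nat.lt_succ_of_le
        (hind.card_le_finrank_succ.trans (Nat.succ_le_succ (Submodule.finrank_le _)))
      set e := Fintype.equivFin ι
      refine mem_iUnion.2 ⟨⟨_, hcard⟩, (w ∘ e.symm, z ∘ e.symm), ⟨⟨fun i => (hw0 _).le, ?_⟩,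
        fun i _ => hzs (mem_range_self _)⟩, ?_⟩
      · simpa [Function.comp_def] using (e.symm.sum_comp w).trans hw1
      · exact e.symm.sum_comp fun i => w i • z i
    · rintro _ ⟨⟨w, z⟩, ⟨⟨hw0, hw1⟩, hz⟩, rfl⟩
      exact (convex_convexHull ℝ s).sum_mem (fun i _ => hw0 i) hw1
        fun i _ => subset_convexHull ℝ s (hz i (mem_univ i))
  rw [hhull]
  exact isCompact_iUnion fun k => ((isCompact_stdSimplex ℝ _).prod
    (isCompact_univ_pi fun _ => hs)).image (by fun_prop)

lemma iInter_convexHull_subset_convexHull_iInter {A : ℕ → Set E} (hA : Antitone A)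
    (hAc : ∀ i, IsCompact (A i)) : ⋂ i, convexHull ℝ (A i) ⊆ convexHull ℝ (⋂ i, A i) := by
  intro x hx
  by_contra hxA
  have hcpt : IsCompact (⋂ i, A i) := (hAc 0).of_isClosed_subset
    (isClosed_iInter fun i => (hAc i).isClosed) (iInter_subset A 0)
  obtain ⟨f, u, hfx, hfA⟩ := geometric_hahn_banach_point_closed (convex_convexHull ℝ _)
    (isCompact_convexHull hcpt).isClosed hxA
  obtain ⟨i, hi⟩ := exists_subset_nhds_of_isCompact hA.directed_ge hAc fun y hy =>
    (isOpen_lt continuous_const f.continuous).mem_nhds (hfA y (subset_convexHull ℝ _ hy))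
  exact (hfx.trans (convexHull_min hi (convex_halfSpace_gt f.isLinear u) (mem_iInter.1 hx i))).false

lemma notMem_extremePoints_iInter_closure_lcloIter {𝓛 : Set (Set E)} {K L : Set E} {e : E}
    (hK : Convex ℝ K) (hL : L ∈ 𝓛) (heL : e ∈ interior L) :
    e ∉ (⋂ i, closure (lcloIter 𝓛 i K)).extremePoints ℝ := by
  set C := ⋂ i, closure (lcloIter 𝓛 i K)
  intro he
  obtain ⟨ε, hε, hball⟩ := Metric.isOpen_iff.1 isOpen_interior e heL
  set S := Metric.closedBall e (3 * ε / 4) \ Metric.ball e (ε / 4)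
  set A := fun i => closure (lcloIter 𝓛 i K) ∩ S
  have hA : Antitone A := fun i j hij =>
    inter_subset_inter_left S (closure_mono (lcloIter_antitone hL hK hij))
  have hAc : ∀ i, IsCompact (A i) := fun i =>
    ((isCompact_closedBall e _).diff Metric.isOpen_ball).inter_left isClosed_closure
  have heA : ∀ i, e ∈ convexHull ℝ (A i) := by
    intro i
    refine (isCompact_convexHull (hAc i)).isClosed.closure_subset
      (Metric.mem_closure_iff.2 fun η hη => ?_)
    obtain ⟨q, hq, hqe⟩ := Metric.mem_closure_iff.1 (mem_iInter.1 he.1 (i + 1)) (min η (ε / 4))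
      (by positivity)
    refine ⟨q, convexHull_mono (inter_subset_inter_left S subset_closure) ?_,
      hqe.trans_le (min_le_left _ _)⟩
    exact mem_convexHull_inter_annulus_of_mem_lred (convex_lcloIter 𝓛 hK i)
      (lcloIter_antitone hL hK i.le_succ hq) (mem_iInter₂.1 hq L hL) hball
      (dist_comm e q ▸ hqe.trans_le (min_le_right _ _))
  have heCS : e ∈ convexHull ℝ (C ∩ S) := by
    have := iInter_convexHull_subset_convexHull_iInter hA hAc (mem_iInter.2 heA)
    rwa [← iInter_inter] at this
  -- an extreme point of `C` lying in the hull of `C ∩ S` must lie in `S`, which misses `e`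
  have := extremePoints_convexHull_subset (inter_extremePoints_subset_extremePoints_of_subset
    (convexHull_min inter_subset_left (convex_iInter fun i =>
      (convex_lcloIter 𝓛 hK i).closure)) ⟨heCS, he⟩)
  exact this.2.2 (Metric.mem_ball_self (by positivity))

end NormedSpace

section InnerProductSpace

open Module

variable [NormedAddCommGroup E] [InnerProductSpace ℝ E] {C : Set E} {p v : E}

-- the nearest point `w` of `C` to `q` nearly supports `C` at `p` when `q` is close to `p`
lemma exists_inner_sub_le_of_isClosed [CompleteSpace E] (hC : IsClosed C) (hCc : Convex ℝ C)
    (hp : p ∈ C) (q : E) :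
    ∃ w ∈ C, ∀ z ∈ C, inner ℝ (q - w) (z - p) ≤ 2 * ‖q - w‖ * ‖q - p‖ := by
  obtain ⟨w, hw, hmin⟩ := exists_norm_eq_iInf_of_complete_convex ⟨p, hp⟩ hC.isComplete hCc q
  have hwq : ‖q - w‖ ≤ ‖q - p‖ :=
    hmin ▸ ciInf_le ⟨0, by rintro _ ⟨z, rfl⟩; positivity⟩ (⟨p, hp⟩ : C)
  have hwp : ‖w - p‖ ≤ 2 * ‖q - p‖ := by
    calc ‖w - p‖ = ‖(q - p) - (q - w)‖ := by congr 1; abel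
      _ ≤ ‖q - p‖ + ‖q - w‖ := norm_sub_le _ _
      _ ≤ 2 * ‖q - p‖ := by linarith
  refine ⟨w, hw, fun z hz => ?_⟩
  calc inner ℝ (q - w) (z - p) = inner ℝ (q - w) (z - w) + inner ℝ (q - w) (w - p) := by
        rw [← inner_add_right, sub_add_sub_cancel]
    _ ≤ 0 + ‖q - w‖ * ‖w - p‖ := add_le_add
        ((norm_eq_iInf_iff_real_inner_le_zero hCc hw).1 hmin z hz) (real_inner_le_norm _ _)
    _ ≤ 2 * ‖q - w‖ * ‖q - p‖ := by nlinarith [norm_nonneg (q - w)]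

lemma finrank_vectorSpan_toExposed_lt [FiniteDimensional ℝ E] {u : E}
    (hu : u ∈ vectorSpan ℝ C) (hu0 : u ≠ 0) :
    finrank ℝ (vectorSpan ℝ ((innerSL ℝ u).toExposed C)) < finrank ℝ (vectorSpan ℝ C) := by
  have hperp : vectorSpan ℝ ((innerSL ℝ u).toExposed C) ≤ (ℝ ∙ u)ᗮ := by
    refine Submodule.span_le.2 ?_
    rintro _ ⟨a, ha, b, hb, rfl⟩
    rw [SetLike.mem_coe, Submodule.mem_orthogonal_singleton_iff_inner_right]
    change inner ℝ u (a - b) = 0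
    rw [inner_sub_right, sub_eq_zero]
    exact le_antisymm (hb.2 a ha.1) (ha.2 b hb.1)
  refine Submodule.finrank_lt_finrank_of_lt (SetLike.lt_iff_le_and_exists.2
    ⟨vectorSpan_mono ℝ (sep_subset _ _), u, hu, fun hu' => hu0 ?_⟩)
  simpa using Submodule.mem_orthogonal_singleton_iff_inner_right.1 (hperp hu')

-- limit of the unit normals at the nearest points to `p + (n + 1)⁻¹ • v`
lemma exists_isExposed_mem_finrank_lt [FiniteDimensional ℝ E] (hC : IsClosed C)
    (hCc : Convex ℝ C) (hp : p ∈ C) (hv : v ∈ vectorSpan ℝ C)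
    (hout : ∀ t : ℝ, 0 < t → p + t • v ∉ C) :
    ∃ F, IsExposed ℝ C F ∧ p ∈ F ∧ finrank ℝ (vectorSpan ℝ F) < finrank ℝ (vectorSpan ℝ C) := by
  set V := vectorSpan ℝ C
  set T : ℕ → Set E := fun n => Metric.sphere 0 1 ∩ V ∩
    ⋂ z ∈ C, {u | inner ℝ u (z - p) ≤ 2 * ‖v‖ * (1 / (n + 1))}
  have hT : ∀ n, (T n).Nonempty := by
    intro n
    set q := p + (1 / (n + 1 : ℝ)) • v
    obtain ⟨w, hw, hle⟩ := exists_inner_sub_le_of_isClosed hC hCc hp q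
    have hqw : q - w ≠ 0 := sub_ne_zero.2 fun h => hout _ (by positivity) (h ▸ hw)
    have hqwV : q - w ∈ V := by
      rw [show q - w = (p - w) + (1 / (n + 1 : ℝ)) • v by simp only [q]; abel]
      exact V.add_mem (vsub_mem_vectorSpan ℝ hp hw) (V.smul_mem _ hv)
    refine ⟨‖q - w‖⁻¹ • (q - w), ⟨?_, V.smul_mem _ hqwV⟩, mem_iInter₂.2 fun z hz => ?_⟩
    · simp [norm_smul, hqw]
    · have hqp : ‖q - p‖ = 1 / (n + 1) * ‖v‖ := by
        rw [add_sub_cancel_left, norm_smul, Real.norm_of_nonneg (by positivity)]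
      change inner ℝ (‖q - w‖⁻¹ • (q - w)) (z - p) ≤ _
      rw [real_inner_smul_left, inv_mul_le_iff₀ (norm_pos_iff.2 hqw)]
      calc inner ℝ (q - w) (z - p) ≤ 2 * ‖q - w‖ * ‖q - p‖ := hle z hz
        _ = ‖q - w‖ * (2 * ‖v‖ * (1 / (n + 1))) := by rw [hqp]; ring
  have hTsub : ∀ n, T (n + 1) ⊆ T n := fun n =>
    inter_subset_inter_right _ (biInter_mono subset_rfl fun z _ u hu => hu.trans <|
      mul_le_mul_of_nonneg_left (one_div_le_one_div_of_le (by positivity)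
        (by push_cast; linarith : (n : ℝ) + 1 ≤ (n + 1 : ℕ) + 1)) (by positivity))
  have hTc : IsCompact (T 0) := ((isCompact_sphere 0 1).inter_right
    (Submodule.closed_of_finiteDimensional V)).inter_right
    (isClosed_biInter fun z _ => isClosed_le (by fun_prop) continuous_const)
  have hTcl : ∀ n, IsClosed (T n) := fun n => (Metric.isClosed_sphere.inter
    (Submodule.closed_of_finiteDimensional V)).inter
    (isClosed_biInter fun z _ => isClosed_le (by fun_prop) continuous_const)
  obtain ⟨u, hu⟩ := IsCompact.nonempty_iInter_of_sequence_nonempty_isCompact_isClosed T hTsub hT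
    hTc hTcl
  have ⟨⟨hu1, huV⟩, _⟩ := mem_iInter.1 hu 0
  have hsup : ∀ z ∈ C, inner ℝ u z ≤ inner ℝ u p := fun z hz => by
    have hlim := (tendsto_one_div_add_atTop_nhds_zero_nat.const_mul (2 * ‖v‖))
    rw [mul_zero] at hlim
    have := ge_of_tendsto' hlim fun n => mem_iInter₂.1 (mem_iInter.1 hu n).2 z hz
    rwa [inner_sub_right, sub_nonpos] at this
  refine ⟨(innerSL ℝ u).toExposed C, ContinuousLinearMap.toExposed.isExposed, ⟨hp, ?_⟩,
    finrank_vectorSpan_toExposed_lt huV (ne_zero_of_mem_unit_sphere ⟨u, hu1⟩)⟩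
  simpa using hsup

-- By induction on the dimension: a line through a non-extreme point leaves `C` in at least one
-- direction, and where it leaves, it meets a face of smaller dimension.
theorem subset_convexHull_extremePoints_add_recCone [FiniteDimensional ℝ E] (hC : IsClosed C)
    (hCc : Convex ℝ C) (hCl : LineFree C) :
    C ⊆ convexHull ℝ (C.extremePoints ℝ) + recCone C := by
  induction hn : finrank ℝ (vectorSpan ℝ C) using Nat.strong_induction_on generalizing C
    with | _ n ih =>
  intro x hx
  by_cases hxe : x ∈ C.extremePoints ℝ
  · exact ⟨x, subset_convexHull ℝ _ hxe, 0, zero_mem_recCone C, add_zero x⟩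
  obtain ⟨v, hv, hv0⟩ : ∃ v ∈ vectorSpan ℝ C, v ≠ 0 := by
    simp only [mem_extremePoints, hx, true_and, not_forall] at hxe
    obtain ⟨x₁, hx₁, x₂, hx₂, -, hne⟩ := hxe
    rcases not_and_or.1 hne with h | h
    · exact ⟨x₁ - x, vsub_mem_vectorSpan ℝ hx₁ hx, sub_ne_zero.2 h⟩
    · exact ⟨x₂ - x, vsub_mem_vectorSpan ℝ hx₂ hx, sub_ne_zero.2 h⟩
  refine hCl.mem_of_endpoints_mem hC hCc (convex_convexHull ℝ _) hx hv0 fun y hy w hw hout => ?_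
  have hwV : w ∈ vectorSpan ℝ C := by rcases hw with rfl | rfl; exacts [hv, neg_mem hv]
  obtain ⟨F, hF, hyF, hFn⟩ := exists_isExposed_mem_finrank_lt hC hCc hy hwV hout
  exact hF.isExtreme.convexHull_extremePoints_add_recCone_subset hC hCc ⟨y, hyF⟩
    (ih _ (hn ▸ hFn) (hF.isClosed hC) (hF.convex hCc) (hCl.mono hF.subset) rfl hyF)

end InnerProductSpace

theorem stmt8_general (d : ℕ) (𝓛 : Set (Set (Euc d)))
    (h𝓛 : ∀ L ∈ 𝓛, IsClosed L ∧ Convex ℝ L ∧ setDim L = d ∧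
      ∃ W : Submodule ℝ (Euc d), recCone L = (W : Set (Euc d)))
    (M : Set (Euc d)) (hM : M = univ \ ⋃ L ∈ 𝓛, interior L)
    (K : Set (Euc d)) (hKcl : IsClosed K) (hKcv : Convex ℝ K) (hKlf : LineFree K) :
    ⋂ i : ℕ, lcloIter 𝓛 i K = convexHull ℝ (K ∩ M) + recCone K := by
  set C := ⋂ i, closure (lcloIter 𝓛 i K)
  have hCK : C ⊆ K := (iInter_subset _ 0).trans hKcl.closure_subset
  have hCcl : IsClosed C := isClosed_iInter fun i => isClosed_closure
  have hCc : Convex ℝ C := convex_iInter fun i => (convex_lcloIter 𝓛 hKcv i).closure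
  have hext : C.extremePoints ℝ ⊆ K ∩ M := fun e he => by
    refine ⟨hCK he.1, hM ▸ ⟨trivial, fun heL => ?_⟩⟩
    obtain ⟨L, hL, heL⟩ := mem_iUnion₂.1 heL
    exact notMem_extremePoints_iInter_closure_lcloIter hKcv hL heL he
  refine subset_antisymm (fun z hz => ?_) (subset_iInter fun i => ?_)
  · have hzC : z ∈ C := iInter_mono (fun i => subset_closure) hz
    exact add_subset_add (convexHull_mono hext) (recCone_subset_recCone hKcl hKcv hCK ⟨z, hzC⟩)
      (subset_convexHull_extremePoints_add_recCone hCcl hCc (hKlf.mono hCK) hzC)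
  · refine convexHull_add_recCone_subset_lcloIter (fun L hL => ?_) inter_subset_left
      (fun L hL => ?_) hKcv i
    · obtain ⟨hLcl, hLc, -, W, hW⟩ := h𝓛 L hL
      exact ⟨hLcl, hLc, fun y hy => by rw [hW] at hy ⊢; exact neg_mem hy⟩
    · rw [hM]
      exact disjoint_left.2 fun x hx hxL => hx.2.2 (mem_iUnion₂.2 ⟨L, hL, hxL⟩)

/-- Theorem: the limit of the sequence of i-th 𝓛-closures, Part I.
Let `𝓛` be a nonempty class of `d`-dimensional closed convex sets in `ℝ^d` whose
recession cones are linear spaces, and let `M := ℝ^d \ ⋃_{L ∈ 𝓛} int L`. Then for every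
line-free closed convex set `K` one has `⋂ᵢ R_𝓛^i(K) = conv(K ∩ M) + rec K`. -/
theorem stmt8 (d : ℕ) (𝓛 : Set (Set (Euc d))) (h𝓛ne : 𝓛.Nonempty)
    (h𝓛 : ∀ L ∈ 𝓛, IsClosed L ∧ Convex ℝ L ∧ setDim L = d ∧
      ∃ W : Submodule ℝ (Euc d), recCone L = (W : Set (Euc d)))
    (M : Set (Euc d)) (hM : M = univ \ ⋃ L ∈ 𝓛, interior L)
    (K : Set (Euc d)) (hKcl : IsClosed K) (hKcv : Convex ℝ K) (hKlf : LineFree K) :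
    ⋂ i : ℕ, lcloIter 𝓛 i K = convexHull ℝ (K ∩ M) + recCone K :=
  stmt8_general d 𝓛 h𝓛 M hM K hKcl hKcv hKlf
end
end

section
/- Let K and L be closed convex sets in ℝ^d such that the lineality space of K is not contained in rec(L) ∪ (−rec(L)). Then R_L(K) = K. -/
open Set Pointwise MeasureTheory ENNReal

noncomputable section

variable {E : Type*}

/-! A closed convex set containing one ray `x + ℝ≥0 • v` contains the ray of direction `v` from
each of its points (`v` then lies in its asymptotic cone). So if neither `v` nor
`-v` is a recession direction of `L` while the line `ℝ • v` lies in the lineality space of `K`,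
then every `x ∈ K` lies on a chord of `K` whose endpoints `x + s • v`, `x - r • v` are outside `L`,
hence in `K \ int L`. -/

open Filter AffineSpace

section RecessionCone

variable [AddCommGroup E] [Module ℝ E] [TopologicalSpace E] [IsTopologicalAddGroup E]
  [ContinuousSMul ℝ E] {L : Set E}

theorem mem_recCone_of_forall_add_smul_mem_s11 (hLcl : IsClosed L) (hLcv : Convex ℝ L) {x v : E}
    (hray : ∀ t : ℝ, 0 ≤ t → x + t • v ∈ L) : v ∈ recCone L := by
  have hv : v ∈ asymptoticCone ℝ L :=
    (tendsto_id.atTop_smul_const_tendsto_asymptoticNhds v |>.asymptoticNhds_vadd_const x).frequently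
      ((eventually_ge_atTop (0 : ℝ)).mono fun t ht => by simpa [add_comm] using hray t ht).frequently
  intro y hy t ht
  simpa [add_comm] using hLcv.smul_vadd_mem_of_isClosed_of_mem_asymptoticCone hLcl ht hv hy

theorem exists_add_smul_notMem_of_notMem_recCone (hLcl : IsClosed L) (hLcv : Convex ℝ L)
    {v : E} (hv : v ∉ recCone L) (x : E) : ∃ t : ℝ, 0 ≤ t ∧ x + t • v ∉ L := by
  by_contra! hray
  exact hv (mem_recCone_of_forall_add_smul_mem_s11 hLcl hLcv hray)

end RecessionCone

theorem mem_segment_add_smul_add_smul_neg {𝕜 : Type*} [Field 𝕜] [LinearOrder 𝕜]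
    [IsStrictOrderedRing 𝕜] [AddCommGroup E] [Module 𝕜 E] (x v : E) {s r : 𝕜} (hs : 0 ≤ s)
    (hr : 0 ≤ r) : x ∈ segment 𝕜 (x + s • v) (x + r • -v) := by
  have h0 : (0 : 𝕜) ∈ segment 𝕜 s (-r) := by
    rw [segment_eq_Icc']
    constructor <;> simp [hs, hr]
  have := mem_image_of_mem (AffineMap.lineMap x (x + v)) h0
  rw [image_segment] at this
  simpa [AffineMap.lineMap_apply_module', add_comm, smul_neg, neg_smul] using this

theorem subset_lred_of_mem_linealSp [AddCommGroup E] [Module ℝ E] [TopologicalSpace E]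
    [IsTopologicalAddGroup E] [ContinuousSMul ℝ E] {K L : Set E} (hLcl : IsClosed L)
    (hLcv : Convex ℝ L) {v : E} (hvK : v ∈ linealSp K) (hv : v ∉ recCone L)
    (hv' : -v ∉ recCone L) : K ⊆ lred L K := by
  intro x hx
  have mem_diff : ∀ {y : E}, y ∈ K → y ∉ L → y ∈ K \ interior L :=
    fun hyK hyL => ⟨hyK, fun h => hyL (interior_subset h)⟩
  obtain ⟨s, hs, hsL⟩ := exists_add_smul_notMem_of_notMem_recCone hLcl hLcv hv x
  obtain ⟨r, hr, hrL⟩ := exists_add_smul_notMem_of_notMem_recCone hLcl hLcv hv' x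
  have hrK : x + r • -v ∈ K := by simpa [smul_neg, ← neg_smul] using hvK x hx (-r)
  exact segment_subset_convexHull (mem_diff (hvK x hx s) hsL) (mem_diff hrK hrL)
    (mem_segment_add_smul_add_smul_neg x v hs hr)

theorem stmt11_general (d : ℕ) (K L : Set (Euc d))
    (hKcv : Convex ℝ K) (hLcl : IsClosed L) (hLcv : Convex ℝ L)
    (h : ¬ (linealSp K ⊆ recCone L ∪ -recCone L)) :
    lred L K = K := by
  obtain ⟨v, hvK, hvL⟩ := not_subset.mp h
  simp only [mem_union, Set.mem_neg, not_or] at hvL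
  exact (convexHull_min sdiff_subset hKcv).antisymm
    (subset_lred_of_mem_linealSp hLcl hLcv hvK hvL.1 hvL.2)

/-- Lemma: no reduction happens.
If `K` and `L` are closed convex sets in `ℝ^d` with `lineal(K) ⊄ rec(L) ∪ (−rec(L))`,
then `R_L(K) = K`. -/
theorem stmt11 (d : ℕ) (K L : Set (Euc d))
    (hKcl : IsClosed K) (hKcv : Convex ℝ K) (hLcl : IsClosed L) (hLcv : Convex ℝ L)
    (h : ¬ (linealSp K ⊆ recCone L ∪ -recCone L)) :
    lred L K = K :=
  stmt11_general d K L hKcv hLcl hLcv h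
end
end

section
/- Let L be a d-dimensional rational polyhedron in ℝ^d with maxfw(L) < ∞ and let p ∈ ℚ^d ∩ int(L). Suppose k, ℓ, m ∈ ℕ satisfy: (a) maxfw(L) ≤ k; (b) for every facet F of L one has (ℓ·aff(F)) ∩ ℤ^d ≠ ∅; (c) m·p ∈ ℤ^d. Then (k·ℓ·m)! · ext((L−p)°) ⊆ ℤ^d, where (L−p)° is the polar set of L−p and ext denotes the set of extreme points. -/
/-!
Write `L = {x | ⟪aᵢ, x⟫ ≤ bᵢ}` and `βᵢ = bᵢ - ⟪aᵢ, p⟫ > 0`. Then `(L - p)° = conv({0} ∪ {aᵢ / βᵢ})`,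
so a nonzero extreme point `y` is some `aⱼ / βⱼ`, and separating it from the other generators
gives `w ∈ L - p` with `⟪y, w⟫ = 1` at which every constraint with `aᵢ / βᵢ ≠ y` is slack. Hence
`y` exposes a facet `F` of `L`, whose primitive integral normal is `u = s • y` with
`s = ⟪u, w⟫ ≤ maxfw(L) ≤ k`. For `x ∈ aff F` with `ℓx ∈ ℤ^d`, the number
`ℓms = m⟪u, ℓx⟫ - ℓ⟪u, mp⟫` is an integer in `(0, kℓm]`, so it divides `(kℓm)!`, and
`(kℓm)! • y = ((kℓm)! / (ℓms)) • ℓm • u ∈ ℤ^d`.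
-/

open Set Pointwise MeasureTheory ENNReal

noncomputable section

variable {E : Type*}

/-- The polar set `C° = {y : ⟨y,x⟩ ≤ 1 for all x ∈ C}`. -/
def polarSet (d : ℕ) (C : Set (Euc d)) : Set (Euc d) :=
  {y | ∀ x ∈ C, (inner ℝ y x : ℝ) ≤ 1}

open scoped RealInnerProductSpace
open Filter Topology

section InnerProductSpace

variable [NormedAddCommGroup E] [InnerProductSpace ℝ E]

theorem exists_inner_lt_one_of_notMem_convexHull [CompleteSpace E] {T : Set E} (hT : T.Finite)
    (h0 : (0 : E) ∈ T) {y : E} (hy : y ∉ convexHull ℝ T) :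
    ∃ x : E, (∀ t ∈ T, ⟪t, x⟫ < 1) ∧ 1 < ⟪y, x⟫ := by
  obtain ⟨f, s, hfT, hfy⟩ := geometric_hahn_banach_closed_point (convex_convexHull ℝ T)
    (hT.isCompact_convexHull ℝ).isClosed hy
  have hs : 0 < s := by simpa using hfT 0 (subset_convexHull ℝ T h0)
  set v := (InnerProductSpace.toDual ℝ E).symm f
  have hv : ∀ t, ⟪t, s⁻¹ • v⟫ = s⁻¹ * f t := fun t => by
    rw [real_inner_smul_right, real_inner_comm, InnerProductSpace.toDual_symm_apply]
  refine ⟨s⁻¹ • v, fun t ht => ?_, ?_⟩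
  · rw [hv, inv_mul_lt_one₀ hs]
    exact hfT t (subset_convexHull ℝ T ht)
  · rwa [hv, one_lt_inv_mul₀ hs]

theorem exists_inner_eq_one_of_mem_extremePoints [CompleteSpace E] {ι : Type*} [Finite ι]
    (g : ι → E) {y : E} (hy : y ∈ (convexHull ℝ (insert 0 (range g))).extremePoints ℝ)
    (hy0 : y ≠ 0) :
    y ∈ range g ∧ ∃ w : E, ⟪y, w⟫ = 1 ∧ ∀ i, g i ≠ y → ⟪g i, w⟫ < 1 := by
  set S := insert (0 : E) (range g)
  have hyS : y ∈ S := extremePoints_convexHull_subset hy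
  have hyT : y ∉ convexHull ℝ (S \ {y}) := fun h =>
    (((convex_convexHull ℝ S).mem_extremePoints_iff_mem_sdiff_convexHull_sdiff).1 hy).2
      (convexHull_mono (sdiff_subset_sdiff_left (subset_convexHull ℝ S)) h)
  obtain ⟨x, hxT, hxy⟩ := exists_inner_lt_one_of_notMem_convexHull
    (((finite_range g).insert 0).sdiff) ⟨mem_insert 0 _, hy0.symm⟩ hyT
  have hpos : 0 < ⟪y, x⟫ := one_pos.trans hxy
  refine ⟨hyS.resolve_left hy0, ⟪y, x⟫⁻¹ • x, ?_, fun i hi => ?_⟩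
  · rw [real_inner_smul_right, inv_mul_cancel₀ hpos.ne']
  · rw [real_inner_smul_right, inv_mul_lt_one₀ hpos]
    exact (hxT _ ⟨mem_insert_of_mem 0 (mem_range_self i), hi⟩).trans hxy

theorem inner_eq_of_mem_affineSpan {s : Set E} {u : E} {t : ℝ} (hs : ∀ x ∈ s, ⟪u, x⟫ = t)
    {x : E} (hx : x ∈ affineSpan ℝ s) : ⟪u, x⟫ = t :=
  AffineMap.eqOn_affineSpan (f := (innerₛₗ ℝ u).toAffineMap) (g := AffineMap.const ℝ E t)
    hs hx

theorem vectorSpan_toExposed_eq {L : Set E} {u w : E} (hw : w ∈ (innerSL ℝ u).toExposed L)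
    (hnear : ∀ᶠ v in 𝓝 0, ⟪u, v⟫ = 0 → w + v ∈ L) :
    vectorSpan ℝ ((innerSL ℝ u).toExposed L) = (ℝ ∙ u)ᗮ := by
  apply le_antisymm
  · rw [vectorSpan_def, Submodule.span_le]
    rintro _ ⟨x₁, hx₁, x₂, hx₂, rfl⟩
    have h : ⟪u, x₁⟫ = ⟪u, x₂⟫ := le_antisymm (hx₂.2 x₁ hx₁.1) (hx₁.2 x₂ hx₂.1)
    rw [SetLike.mem_coe, Submodule.mem_orthogonal_singleton_iff_inner_right]
    simp only [vsub_eq_sub, inner_sub_right, h, sub_self]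
  · intro v hv
    rw [Submodule.mem_orthogonal_singleton_iff_inner_right] at hv
    have hlim : Tendsto (fun t : ℝ => t • v) (𝓝[≠] 0) (𝓝 0) :=
      tendsto_nhdsWithin_of_tendsto_nhds <|
        (show Continuous fun t : ℝ => t • v by fun_prop).tendsto' 0 0 (zero_smul ℝ v)
    obtain ⟨t, htL, ht0⟩ := ((hlim.eventually hnear).and self_mem_nhdsWithin).exists
    have hu : ⟪u, t • v⟫ = 0 := by rw [real_inner_smul_right, hv, mul_zero]
    have hwt : w + t • v ∈ (innerSL ℝ u).toExposed L := by
      refine ⟨htL hu, fun z hz => ?_⟩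
      simpa [inner_add_right, hu] using hw.2 z hz
    have := vsub_mem_vectorSpan ℝ hwt hw
    rwa [vsub_eq_sub, add_sub_cancel_left, Submodule.smul_mem_iff _ ht0] at this

theorem convex_setOf_inner_le {ι : Type*} (a : ι → E) (b : ι → ℝ) :
    Convex ℝ {x | ∀ i, ⟪a i, x⟫ ≤ b i} := by
  simp only [ofPred_forall]
  exact convex_iInter fun i => convex_halfSpace_le (innerₛₗ ℝ (a i)).isLinear (b i)

theorem setOf_inner_le_sub_singleton {ι : Type*} (a : ι → E) (b : ι → ℝ) (p : E) :
    {x | ∀ i, ⟪a i, x⟫ ≤ b i} - {p} = {x | ∀ i, ⟪a i, x⟫ ≤ b i - ⟪a i, p⟫} := by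
  ext x
  simp [sub_singleton, sub_eq_iff_eq_add, le_sub_iff_add_le, inner_add_right]

theorem inner_lt_of_mem_interior {L : Set E} {a : E} {b : ℝ} (ha : a ≠ 0)
    (hL : L ⊆ {x | ⟪a, x⟫ ≤ b}) {p : E} (hp : p ∈ interior L) : ⟪a, p⟫ < b := by
  have hopen := (innerSL ℝ a).isOpenMap_of_ne_zero <| by
    rwa [← norm_ne_zero_iff, innerSL_apply_norm, norm_ne_zero_iff]
  have : p ∈ innerSL ℝ a ⁻¹' interior (Iic b) := by
    rw [hopen.preimage_interior_eq_interior_preimage (innerSL ℝ a).continuous]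
    exact interior_mono hL hp
  simpa [interior_Iic] using this

theorem eventually_add_mem_setOf_inner_le {ι : Type*} [Finite ι] {a : ι → E} {b : ι → ℝ}
    {u w : E} (hw : ∀ i, ⟪a i, w⟫ < b i ∨ ⟪a i, w⟫ ≤ b i ∧ ∃ r : ℝ, a i = r • u) :
    ∀ᶠ v in 𝓝 0, ⟪u, v⟫ = 0 → w + v ∈ {x | ∀ i, ⟪a i, x⟫ ≤ b i} := by
  have hstrict : ∀ᶠ v in 𝓝 (0 : E), ∀ i, ⟪a i, w⟫ < b i → ⟪a i, w + v⟫ < b i := by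
    refine eventually_all.2 fun i => ?_
    by_cases hi : ⟪a i, w⟫ < b i
    · have hcont : Continuous fun v => ⟪a i, w + v⟫ := by fun_prop
      exact (hcont.continuousAt.eventually_lt continuousAt_const (by simpa using hi)).mono
        fun v hv _ => hv
    · exact Eventually.of_forall fun v h => absurd h hi
  filter_upwards [hstrict] with v hv hv0 i
  rcases hw i with h | ⟨h, r, hr⟩
  · exact (hv i h).le
  · simpa [hr, inner_add_right, real_inner_smul_left, hv0] using h

end InnerProductSpace

theorem exists_primitive_of_ne_zero {ι : Type*} [Fintype ι] (q : ι → ℚ) (hq : q ≠ 0) :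
    ∃ z : ι → ℤ, Finset.univ.gcd z = 1 ∧ ∃ c : ℚ, 0 < c ∧ ∀ i, (z i : ℚ) = c * q i := by
  set D : ℤ := ∏ i, ((q i).den : ℤ)
  have hD : 0 < D := Finset.prod_pos fun i _ => mod_cast (q i).den_pos
  have hDq : ∀ i, ∃ n : ℤ, (n : ℚ) = D * q i := fun i => by
    have hdvd : ((q i).den : ℤ) ∣ D := Finset.dvd_prod_of_mem _ (Finset.mem_univ i)
    refine ⟨(q i).num * (D / (q i).den), ?_⟩
    rw [Int.cast_mul, Int.cast_div hdvd (by simp), ← Rat.mul_den_eq_num]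
    push_cast
    field_simp
  choose n hn using hDq
  obtain ⟨i₀, hi₀⟩ := Function.ne_iff.1 hq
  obtain ⟨z, hnz, hz⟩ := Finset.univ.extract_gcd n ⟨i₀, Finset.mem_univ i₀⟩
  have hn₀ : n i₀ ≠ 0 := fun h => hi₀ (by simpa [h, hD.ne'] using (hn i₀).symm)
  have hG : 0 < Finset.univ.gcd n :=
    (Int.nonneg_of_normalize_eq_self Finset.normalize_gcd).lt_of_ne' fun h =>
      hn₀ (Finset.gcd_eq_zero_iff.1 h i₀ (Finset.mem_univ i₀))
  refine ⟨z, hz, D / Finset.univ.gcd n, by positivity, fun i => ?_⟩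
  have h := congrArg (Int.cast : ℤ → ℚ) (hnz i (Finset.mem_univ i))
  push_cast at h
  rw [div_mul_eq_mul_div, ← hn i, h]
  field_simp

section Euclidean

variable {d : ℕ}

theorem convex_polarSet (C : Set (Euc d)) : Convex ℝ (polarSet d C) := by
  simp only [polarSet, ofPred_forall]
  exact convex_iInter₂ fun x _ => by
    simpa only [real_inner_comm x, innerₛₗ_apply_apply] using
      convex_halfSpace_le (innerₛₗ ℝ x).isLinear 1

theorem polarSet_setOf_inner_le {ι : Type*} [Finite ι] (a : ι → Euc d) {β : ι → ℝ}
    (hβ : ∀ i, 0 < β i) :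
    polarSet d {x | ∀ i, ⟪a i, x⟫ ≤ β i} =
      convexHull ℝ (insert 0 (range fun i => (β i)⁻¹ • a i)) := by
  have hscale : ∀ i x, ⟪(β i)⁻¹ • a i, x⟫ ≤ 1 ↔ ⟪a i, x⟫ ≤ β i := fun i x => by
    rw [real_inner_smul_left, inv_mul_le_one₀ (hβ i)]
  apply Subset.antisymm
  · intro y hy
    by_contra hyS
    obtain ⟨x, hxS, hxy⟩ :=
      exists_inner_lt_one_of_notMem_convexHull ((finite_range _).insert 0) (mem_insert 0 _) hyS
    have hxC : ∀ i, ⟪a i, x⟫ ≤ β i := fun i =>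
      (hscale i x).1 (hxS _ (mem_insert_of_mem 0 (mem_range_self i))).le
    exact (hy x hxC).not_gt hxy
  · refine convexHull_min ?_ (convex_polarSet _)
    rintro _ (rfl | ⟨i, rfl⟩) x hx
    · simp
    · exact (hscale i x).2 (hx i)

theorem isFacetOf_toExposed {L : Set (Euc d)} (hL : Convex ℝ L) {u w : Euc d} (hu : u ≠ 0)
    (hw : w ∈ (innerSL ℝ u).toExposed L) (hnear : ∀ᶠ v in 𝓝 0, ⟪u, v⟫ = 0 → w + v ∈ L) :
    IsFacetOf d L ((innerSL ℝ u).toExposed L) := by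
  refine ⟨⟨ContinuousLinearMap.toExposed.isExposed.convex hL,
    ContinuousLinearMap.toExposed.isExposed.isExtreme⟩, ?_⟩
  have := (ℝ ∙ u).finrank_add_finrank_orthogonal
  rw [finrank_span_singleton hu, finrank_euclideanSpace_fin] at this
  rw [setDim, vectorSpan_toExposed_eq hw hnear]
  omega

theorem isOuterNormalOf_toExposed (L : Set (Euc d)) (u : Euc d) :
    IsOuterNormalOf d L ((innerSL ℝ u).toExposed L) u :=
  rfl

theorem IsOuterNormalOf.smul {L F : Set (Euc d)} {u : Euc d} (h : IsOuterNormalOf d L F u)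
    {c : ℝ} (hc : 0 < c) : IsOuterNormalOf d L F (c • u) := by
  simpa only [IsOuterNormalOf, real_inner_smul_left, mul_le_mul_iff_right₀ hc] using h

theorem exists_facet_of_mem_extremePoints_polarSet {ι : Type*} [Finite ι] {a : ι → Euc d}
    {b : ι → ℝ} {L : Set (Euc d)} (hL : L = {x | ∀ i, ⟪a i, x⟫ ≤ b i}) (ha : ∀ i, a i ≠ 0)
    {p : Euc d} (hp : p ∈ interior L) {y : Euc d}
    (hy : y ∈ (polarSet d (L - {p})).extremePoints ℝ) (hy0 : y ≠ 0) :
    (∃ j, ∃ r : ℝ, 0 < r ∧ a j = r • y) ∧ (∃ w ∈ (innerSL ℝ y).toExposed L, ⟪y, w - p⟫ = 1) ∧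
      IsFacetOf d L ((innerSL ℝ y).toExposed L) := by
  subst hL
  set β := fun i => b i - ⟪a i, p⟫ with hβdef
  have hβ : ∀ i, 0 < β i := fun i =>
    sub_pos.2 (inner_lt_of_mem_interior (ha i) (ofPred_subset_ofPred.2 fun _ hx => hx i) hp)
  have hyP := hy.1
  rw [setOf_inner_le_sub_singleton, polarSet_setOf_inner_le a hβ] at hy
  obtain ⟨⟨j, hj⟩, w, hw1, hw⟩ := exists_inner_eq_one_of_mem_extremePoints _ hy hy0
  have ha_eq : ∀ i, (β i)⁻¹ • a i = y → a i = β i • y := fun i h => by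
    rw [← h, smul_inv_smul₀ (hβ i).ne']
  have hwL : ∀ i, ⟪a i, w + p⟫ < b i ∨ ⟪a i, w + p⟫ ≤ b i ∧ ∃ r : ℝ, a i = r • y := fun i => by
    rw [inner_add_right]
    by_cases hi : (β i)⁻¹ • a i = y
    · refine .inr ⟨le_of_eq ?_, _, ha_eq i hi⟩
      rw [ha_eq i hi, real_inner_smul_left, hw1, mul_one, ← ha_eq i hi, hβdef, sub_add_cancel]
    · have := hw i hi
      rw [real_inner_smul_left, inv_mul_lt_one₀ (hβ i), hβdef] at this
      exact .inl (by linarith)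
  have hwp : w + p ∈ (innerSL ℝ y).toExposed {x | ∀ i, ⟪a i, x⟫ ≤ b i} := by
    refine ⟨fun i => (hwL i).elim le_of_lt And.left, fun x hx => ?_⟩
    have := hyP (x - p) (sub_mem_sub hx (mem_singleton p))
    simp only [innerSL_apply_apply, inner_sub_right, inner_add_right, hw1] at this ⊢
    linarith
  refine ⟨⟨j, β j, hβ j, ha_eq j hj⟩, ⟨w + p, hwp, by rw [add_sub_cancel_right, hw1]⟩, ?_⟩
  exact isFacetOf_toExposed (convex_setOf_inner_le a b) hy0 hwp
    (eventually_add_mem_setOf_inner_le hwL)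

theorem IsRatPolyhedron.exists_eq_setOf_inner_le {L : Set (Euc d)}
    (hL : IsRatPolyhedron d L) :
    ∃ (n : ℕ) (a : Fin n → Fin d → ℚ) (b : Fin n → ℝ), (∀ i, a i ≠ 0) ∧
      L = {x | ∀ i, ⟪WithLp.toLp 2 fun j => (a i j : ℝ), x⟫ ≤ b i} := by
  obtain ⟨n, a, b, ha, rfl⟩ := hL
  refine ⟨n, a, fun i => b i, ha, ?_⟩
  ext x
  simp [PiLp.inner_apply, mul_comm]

theorem inner_mem_range_intCast {x y : Euc d} (hx : x ∈ latticePts d) (hy : y ∈ latticePts d) :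
    ⟪x, y⟫ ∈ range (Int.cast : ℤ → ℝ) := by
  choose zx hzx using hx
  choose zy hzy using hy
  refine ⟨∑ i, zx i * zy i, ?_⟩
  simp [PiLp.inner_apply, hzx, hzy, mul_comm]

theorem intCast_smul_mem_latticePts (n : ℤ) {x : Euc d} (hx : x ∈ latticePts d) :
    (n : ℝ) • x ∈ latticePts d := fun i => by
  obtain ⟨z, hz⟩ := hx i
  exact ⟨n * z, by simp [hz]⟩

theorem factorial_smul_mem_latticePts {y : Euc d} {n : ℤ} {K : ℕ} (hn : 0 < n) (hnK : n ≤ K)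
    (hy : (n : ℝ) • y ∈ latticePts d) : (K.factorial : ℝ) • y ∈ latticePts d := by
  lift n to ℕ using hn.le
  obtain ⟨t, ht⟩ := Nat.dvd_factorial (by omega) (by omega : n ≤ K)
  have := intCast_smul_mem_latticePts t hy
  rwa [Int.cast_natCast, Int.cast_natCast, smul_smul, ← Nat.cast_mul, mul_comm, ← ht] at this

theorem factorial_smul_mem_latticePts_of_inner_sub_eq_one {x y p : Euc d} {s : ℝ} {k ℓ m : ℕ}
    (hℓ : 0 < ℓ) (hm : 0 < m) (hs : 0 < s) (hsk : s ≤ k) (hy : s • y ∈ latticePts d)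
    (hx : (ℓ : ℝ) • x ∈ latticePts d) (hp : (m : ℝ) • p ∈ latticePts d) (hxp : ⟪y, x - p⟫ = 1) :
    ((k * ℓ * m).factorial : ℝ) • y ∈ latticePts d := by
  obtain ⟨Z₁, hZ₁⟩ := inner_mem_range_intCast hy hx
  obtain ⟨Z₂, hZ₂⟩ := inner_mem_range_intCast hy hp
  have hN : ((m * Z₁ - ℓ * Z₂ : ℤ) : ℝ) = ℓ * m * s := by
    rw [inner_sub_right] at hxp
    push_cast
    rw [hZ₁, hZ₂]
    simp only [real_inner_smul_left, real_inner_smul_right]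
    linear_combination (ℓ * m * s) * hxp
  refine factorial_smul_mem_latticePts (n := m * Z₁ - ℓ * Z₂) ?_ ?_ ?_
  · have : (0 : ℝ) < ((m * Z₁ - ℓ * Z₂ : ℤ) : ℝ) := by rw [hN]; positivity
    exact_mod_cast this
  · have : ((m * Z₁ - ℓ * Z₂ : ℤ) : ℝ) ≤ (k * ℓ * m : ℕ) := by
      rw [hN]
      push_cast
      nlinarith [mul_pos (Nat.cast_pos.2 hℓ : (0 : ℝ) < ℓ) (Nat.cast_pos.2 hm : (0 : ℝ) < m)]
    exact_mod_cast this
  · rw [hN, mul_smul]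
    exact_mod_cast intCast_smul_mem_latticePts (ℓ * m) hy

end Euclidean

theorem stmt13_general (d : ℕ) (L : Set (Euc d))
    (hL : IsRatPolyhedron d L)
    (p : Euc d) (hpL : p ∈ interior L)
    (k ℓ m : ℕ) (hℓ : 0 < ℓ) (hm : 0 < m)
    (ha : MaxFacetWidthLE d L (k : ℝ))
    (hb : ∀ F : Set (Euc d), IsFacetOf d L F →
      (((ℓ : ℝ) • (affineSpan ℝ F : Set (Euc d))) ∩ latticePts d).Nonempty)
    (hc : ∀ i, ∃ z : ℤ, (m : ℝ) * p i = (z : ℝ)) :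
    ((Nat.factorial (k * ℓ * m) : ℝ)) • ((polarSet d (L - {p})).extremePoints ℝ)
      ⊆ latticePts d := by
  obtain ⟨n, a, b, ha0, hLab⟩ := hL.exists_eq_setOf_inner_le
  rintro _ ⟨y, hy, rfl⟩
  rcases eq_or_ne y 0 with rfl | hy0
  · simp only [smul_zero]
    exact fun i => ⟨0, by simp⟩
  have hA0 : ∀ i, (WithLp.toLp 2 fun j => (a i j : ℝ) : Euc d) ≠ 0 := fun i h =>
    ha0 i (funext fun j => by simpa using congr(($h).ofLp j))
  obtain ⟨⟨j, r, hr, hj⟩, ⟨w, hwF, hw1⟩, hfacet⟩ :=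
    exists_facet_of_mem_extremePoints_polarSet hLab hA0 hpL hy hy0
  obtain ⟨z, hz, c, hc0, hzc⟩ := exists_primitive_of_ne_zero (a j) (ha0 j)
  set u : Euc d := WithLp.toLp 2 fun i => (z i : ℝ)
  have hu : u = ((c : ℝ) * r) • y := by
    ext i
    have hji := congr(($hj).ofLp i)
    simp only [u, PiLp.smul_apply, smul_eq_mul] at hji ⊢
    rw [mul_assoc, ← hji]
    exact_mod_cast hzc i
  have hcr : 0 < (c : ℝ) * r := by positivity
  have hprim : u ∈ primFacetNormals d L :=
    ⟨⟨z, fun _ => rfl, hz⟩, _, hfacet, hu ▸ (isOuterNormalOf_toExposed L y).smul hcr⟩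
  have hwidth : (c : ℝ) * r ≤ k := by
    have := ha u hprim w hwF.1 p (interior_subset hpL)
    rwa [← inner_sub_right, hu, real_inner_smul_left, hw1, mul_one] at this
  obtain ⟨_, ⟨x, hx, rfl⟩, hξ⟩ := hb _ hfacet
  have hxw : ⟪y, x⟫ = ⟪y, w⟫ := inner_eq_of_mem_affineSpan
    (fun x' hx' => le_antisymm (hwF.2 x' hx'.1) (hx'.2 w hwF.1)) hx
  refine factorial_smul_mem_latticePts_of_inner_sub_eq_one hℓ hm hcr hwidth
    (hu ▸ fun i => ⟨z i, rfl⟩) hξ hc ?_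
  rwa [inner_sub_right, hxw, ← inner_sub_right]

/-- Lemma: integrality of the polar, Part I.
Let `L` be a `d`-dimensional rational polyhedron with `maxfw(L) < ∞`, let
`p ∈ ℚ^d ∩ int L`, and let `k, ℓ, m ∈ ℕ` satisfy: (a) `maxfw(L) ≤ k`; (b) every facet
`F` of `L` has `(ℓ·aff F) ∩ ℤ^d ≠ ∅`; (c) `m·p ∈ ℤ^d`. Then
`(k·ℓ·m)! · ext((L−p)°) ⊆ ℤ^d`. -/
theorem stmt13 (d : ℕ) (L : Set (Euc d))
    (hL : IsRatPolyhedron d L) (hLdim : setDim L = d)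
    (hfin : ∀ u ∈ primFacetNormals d L, ∃ c : ℝ, ∀ x ∈ L, ∀ y ∈ L,
      (inner ℝ u x : ℝ) - inner ℝ u y ≤ c)
    (p : Euc d) (hpQ : ∀ i, ∃ q : ℚ, p i = (q : ℝ)) (hpL : p ∈ interior L)
    (k ℓ m : ℕ) (hk : 0 < k) (hℓ : 0 < ℓ) (hm : 0 < m)
    (ha : MaxFacetWidthLE d L (k : ℝ))
    (hb : ∀ F : Set (Euc d), IsFacetOf d L F →
      (((ℓ : ℝ) • (affineSpan ℝ F : Set (Euc d))) ∩ latticePts d).Nonempty)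
    (hc : ∀ i, ∃ z : ℤ, (m : ℝ) * p i = (z : ℝ)) :
    ((Nat.factorial (k * ℓ * m) : ℝ)) • ((polarSet d (L - {p})).extremePoints ℝ)
      ⊆ latticePts d :=
  stmt13_general d L hL p hpL k ℓ m hℓ hm ha hb hc
end
end

section
/- Let (K_i)_{i∈ℕ} be a decreasing sequence of closed convex sets in ℝ^d (that is, K_{i+1} ⊆ K_i for every i ∈ ℕ) such that K := ⋂_{i=1}^{∞} K_i is bounded and nonempty. Then there exists j ∈ ℕ such that for every i ∈ ℕ with i ≥ j the set K_i is bounded. -/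
open Set Pointwise MeasureTheory ENNReal

noncomputable section

variable {E : Type*}

/-!
If every `K i` were unbounded, pick a common point `x₀` and points `y i ∈ K i` with
`‖y i - x₀‖ > i`. By convexity `K i` contains the segment from `x₀` of length `i` in the unit
direction of `y i - x₀`; a subsequence of these directions converges to a unit vector `v`, and
since the `K j` are closed and decreasing, the whole ray `x₀ + ℝ≥0 • v` lies in every `K j`,
hence in their bounded intersection, which is absurd.
-/

open Filter Topology

section Ray

variable [NormedAddCommGroup E] [NormedSpace ℝ E]

theorem Convex.add_smul_normalize_mem {s : Set E} (hs : Convex ℝ s) {x y : E} (hx : x ∈ s)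
    (hy : y ∈ s) {t : ℝ} (ht₀ : 0 ≤ t) (ht : t ≤ ‖y - x‖) :
    x + t • (‖y - x‖⁻¹ • (y - x)) ∈ s := by
  rcases (norm_nonneg (y - x)).eq_or_lt with hxy | hxy
  · obtain rfl : t = 0 := le_antisymm (hxy ▸ ht) ht₀
    simpa using hx
  · rw [smul_smul]
    refine hs.add_smul_mem hx (by rwa [add_sub_cancel]) ⟨by positivity, ?_⟩
    rwa [← div_eq_mul_inv, div_le_one hxy]

theorem not_isBounded_of_forall_add_smul_mem {S : Set E} {x v : E} (hv : v ≠ 0)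
    (h : ∀ t : ℝ, 0 ≤ t → x + t • v ∈ S) : ¬ Bornology.IsBounded S := by
  intro hS
  obtain ⟨r, hr⟩ := (Metric.isBounded_iff_subset_closedBall x).mp hS
  have hv₀ : 0 < ‖v‖ := norm_pos_iff.mpr hv
  have hmem := hr (h ((max r 0 + 1) / ‖v‖) (by positivity))
  rw [Metric.mem_closedBall, dist_eq_norm, add_sub_cancel_left, norm_smul, Real.norm_eq_abs,
    abs_of_nonneg (by positivity), div_mul_cancel₀ _ hv₀.ne'] at hmem
  linarith [le_max_left r 0]

theorem exists_ray_subset_of_antitone_of_not_isBounded [ProperSpace E] {K : ℕ → Set E}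
    (hant : Antitone K) (hcl : ∀ i, IsClosed (K i)) (hcv : ∀ i, Convex ℝ (K i)) {x₀ : E} (hx₀ : ∀ i, x₀ ∈ K i)
    (hunb : ∀ i, ¬ Bornology.IsBounded (K i)) :
    ∃ v : E, ‖v‖ = 1 ∧ ∀ t : ℝ, 0 ≤ t → ∀ i, x₀ + t • v ∈ K i := by
  have hfar : ∀ i : ℕ, ∃ y ∈ K i, (i : ℝ) < ‖y - x₀‖ := by
    intro i
    by_contra! hnear
    exact hunb i <| (Metric.isBounded_iff_subset_closedBall x₀).mpr
      ⟨i, fun y hy => by simpa [dist_eq_norm] using hnear y hy⟩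
  choose y hyK hyd using hfar
  have hne : ∀ i, y i - x₀ ≠ 0 := fun i =>
    norm_pos_iff.mp ((Nat.cast_nonneg i).trans_lt (hyd i))
  set u : ℕ → E := fun i => ‖y i - x₀‖⁻¹ • (y i - x₀)
  have hus : ∀ i, u i ∈ Metric.sphere (0 : E) 1 := fun i => by
    simpa [u] using norm_smul_inv_norm (𝕜 := ℝ) (hne i)
  obtain ⟨v, hv, φ, hφ, hlim⟩ := (isCompact_sphere (0 : E) 1).tendsto_subseq hus
  refine ⟨v, by simpa using hv, fun t ht j => ?_⟩
  have htend : Tendsto (fun k => x₀ + t • u (φ k)) atTop (𝓝 (x₀ + t • v)) :=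
    tendsto_const_nhds.add (hlim.const_smul t)
  refine (hcl j).mem_of_tendsto htend ?_
  filter_upwards [eventually_ge_atTop (max j ⌈t⌉₊)] with k hk
  have hφk : max j ⌈t⌉₊ ≤ φ k := hk.trans hφ.le_apply
  have htφ : t ≤ ‖y (φ k) - x₀‖ := calc
    t ≤ ⌈t⌉₊ := Nat.le_ceil t
    _ ≤ φ k := by exact_mod_cast (le_max_right _ _).trans hφk
    _ ≤ ‖y (φ k) - x₀‖ := (hyd (φ k)).le
  exact hant ((le_max_left _ _).trans hφk)
    ((hcv (φ k)).add_smul_normalize_mem (hx₀ (φ k)) (hyK (φ k)) ht htφ)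

end Ray

/-- Lemma: eventual boundedness of a decreasing sequence.
Let `(K_i)` be a decreasing sequence of closed convex sets in `ℝ^d` whose intersection
`K := ⋂ᵢ K_i` is bounded and nonempty. Then there is `j` such that `K_i` is bounded for
every `i ≥ j`. -/
theorem stmt16 (d : ℕ) (K : ℕ → Set (Euc d))
    (hcl : ∀ i, IsClosed (K i)) (hcv : ∀ i, Convex ℝ (K i))
    (hdec : ∀ i, K (i + 1) ⊆ K i)
    (hb : Bornology.IsBounded (⋂ i, K i)) (hne : (⋂ i, K i).Nonempty) :
    ∃ j : ℕ, ∀ i ≥ j, Bornology.IsBounded (K i) := by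
  have hant : Antitone K := antitone_nat_of_succ_le hdec
  by_contra! hunb
  have hunb' : ∀ j, ¬ Bornology.IsBounded (K j) := fun j hj => by
    obtain ⟨i, hij, hi⟩ := hunb j
    exact hi (hj.subset (hant hij))
  obtain ⟨x₀, hx₀⟩ := hne
  obtain ⟨v, hv, hray⟩ := exists_ray_subset_of_antitone_of_not_isBounded hant hcl hcv
    (mem_iInter.mp hx₀) hunb'
  exact not_isBounded_of_forall_add_smul_mem (norm_ne_zero_iff.mp (hv ▸ one_ne_zero))
    (fun t ht => mem_iInter.mpr (hray t ht)) hb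
end
end

section
/- Let 𝕄 = ℤ^m × ℝ^n be a mixed-integer space in ℝ^d (m ≥ 1, n ≥ 0, m + n = d). Then a set P ⊆ ℝ^d is a maximal 𝕄-free set if and only if P = P' × ℝ^n, where P' is a maximal lattice-free set in ℝ^m. -/
open Set Pointwise MeasureTheory ENNReal

noncomputable section

variable {E : Type*}

/-- The mixed-integer space `𝕄 = ℤ^m × ℝ^n` inside `ℝ^d = ℝ^m × ℝ^n`. -/
def mixedM (m n : ℕ) : Set (Euc m × Euc n) := {x | x.1 ∈ latticePts m}

/-- `L ⊆ ℝ^m × ℝ^n` is `𝕄`-free: `(m+n)`-dimensional, closed, convex, with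
`int L ∩ 𝕄 = ∅`. -/
def IsMFree (m n : ℕ) (L : Set (Euc m × Euc n)) : Prop :=
  IsClosed L ∧ Convex ℝ L ∧ setDim L = m + n ∧ interior L ∩ mixedM m n = ∅

/-- `L` is maximal `𝕄`-free: `𝕄`-free and not properly contained in an `𝕄`-free set. -/
def IsMaxMFree (m n : ℕ) (L : Set (Euc m × Euc n)) : Prop :=
  IsMFree m n L ∧ ∀ L' : Set (Euc m × Euc n), IsMFree m n L' → L ⊆ L' → L = L'

/-- `K ⊆ ℝ^m` is lattice-free. -/
def IsLatticeFree (m : ℕ) (K : Set (Euc m)) : Prop :=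
  IsClosed K ∧ Convex ℝ K ∧ setDim K = m ∧ interior K ∩ latticePts m = ∅

/-- `K` is maximal lattice-free. -/
def IsMaxLatticeFree (m : ℕ) (K : Set (Euc m)) : Prop :=
  IsLatticeFree m K ∧ ∀ K' : Set (Euc m), IsLatticeFree m K' → K ⊆ K' → K = K'

/-! The projection `π : ℝ^m × ℝ^n → ℝ^m` sends an `𝕄`-free set `L` to a lattice-free set
`closure (π L)`: since `L` is convex with nonempty interior, `int (closure (π L)) = π (int L)`,
which misses `ℤ^m`. So every `𝕄`-free set lies in the `𝕄`-free cylinder `closure (π L) × ℝ^n`,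
and cylinders over lattice-free sets are `𝕄`-free. As `K ↦ K × ℝ^n` is an order embedding,
maximal `𝕄`-free sets are exactly the cylinders over maximal lattice-free sets. -/

theorem OrderEmbedding.maximal_iff_exists_maximal {α β : Type*} [PartialOrder α]
    [PartialOrder β] {P : α → Prop} {Q : β → Prop} (f : β ↪o α) (g : α → β)
    (hf : ∀ b, Q b → P (f b)) (hg : ∀ a, P a → Q (g a)) (hfg : ∀ a, P a → a ≤ f (g a)) {a : α} :
    Maximal P a ↔ ∃ b, Maximal Q b ∧ a = f b := by
  constructor
  · rintro ⟨ha, hmax⟩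
    have hafg : a = f (g a) :=
      le_antisymm (hfg a ha) (hmax (hf _ (hg a ha)) (hfg a ha))
    refine ⟨g a, ⟨hg a ha, fun b hb hab => ?_⟩, hafg⟩
    have hfba : f b ≤ a := hmax (hf b hb) (hafg.trans_le (f.monotone hab))
    exact f.le_iff_le.mp (hfba.trans hafg.le)
  · rintro ⟨b, ⟨hb, hmax⟩, rfl⟩
    refine ⟨hf b hb, fun a ha hba => ?_⟩
    have hbga : b ≤ g a := f.le_iff_le.mp (hba.trans (hfg a ha))
    exact (hfg a ha).trans (f.monotone (hmax (hg a ha) hbga))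

section

variable {E : Type*} [NormedAddCommGroup E] [NormedSpace ℝ E] [FiniteDimensional ℝ E]

theorem setDim_eq_finrank_iff {s : Set E} :
    setDim s = Module.finrank ℝ E ↔ vectorSpan ℝ s = ⊤ :=
  ⟨Submodule.eq_top_of_finrank_eq, fun h => by rw [setDim, h, finrank_top]⟩

theorem Convex.setDim_eq_finrank_iff_interior_nonempty [Nontrivial E] {s : Set E}
    (hs : Convex ℝ s) : setDim s = Module.finrank ℝ E ↔ (interior s).Nonempty := by
  rw [setDim_eq_finrank_iff, hs.interior_nonempty_iff_affineSpan_eq_top,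
    AffineSubspace.affineSpan_eq_top_iff_vectorSpan_eq_top_of_nontrivial]

end

theorem Convex.interior_closure_image_fst {E F : Type*} [NormedAddCommGroup E] [NormedSpace ℝ E]
    [NormedAddCommGroup F] [NormedSpace ℝ F] {L : Set (E × F)} (hL : Convex ℝ L)
    (hint : (interior L).Nonempty) :
    interior (closure (Prod.fst '' L)) = Prod.fst '' interior L := by
  have hU : IsOpen (Prod.fst '' interior L) := isOpenMap_fst _ isOpen_interior
  have hUconv : Convex ℝ (Prod.fst '' interior L) :=
    hL.interior.linear_image (LinearMap.fst ℝ E F)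
  have hUint : (interior (Prod.fst '' interior L)).Nonempty := by
    rw [hU.interior_eq]; exact hint.image _
  refine subset_antisymm ?_
    (hU.subset_interior_iff.mpr ((image_mono interior_subset).trans subset_closure))
  calc interior (closure (Prod.fst '' L))
      ⊆ interior (closure (Prod.fst '' interior L)) := by
        refine interior_mono (closure_minimal ?_ isClosed_closure)
        calc Prod.fst '' L ⊆ Prod.fst '' closure (interior L) := by
              rw [hL.closure_interior_eq_closure_of_nonempty_interior hint]
              exact image_mono subset_closure
          _ ⊆ closure (Prod.fst '' interior L) := image_closure_subset_closure_image continuous_fst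
    _ = Prod.fst '' interior L := by
        rw [hUconv.interior_closure_eq_interior_of_nonempty_interior hUint, hU.interior_eq]

def prodUnivOrderEmbedding (α β : Type*) [Nonempty β] : Set α ↪o Set (α × β) :=
  OrderEmbedding.ofMapLEIff (fun s => s ×ˢ univ) fun _ _ =>
    prod_subset_prod_iff_left univ_nonempty

theorem finrank_euc_prod (m n : ℕ) : Module.finrank ℝ (Euc m × Euc n) = m + n := by
  rw [Module.finrank_prod, finrank_euclideanSpace_fin, finrank_euclideanSpace_fin]

section

variable {m n : ℕ}

theorem nontrivial_euc (hm : 1 ≤ m) : Nontrivial (Euc m) :=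
  Module.nontrivial_of_finrank_pos (by rw [finrank_euclideanSpace_fin]; omega)

theorem isMaxMFree_iff_maximal {L : Set (Euc m × Euc n)} :
    IsMaxMFree m n L ↔ Maximal (IsMFree m n) L :=
  maximal_iff.symm

theorem isMaxLatticeFree_iff_maximal {K : Set (Euc m)} :
    IsMaxLatticeFree m K ↔ Maximal (IsLatticeFree m) K :=
  maximal_iff.symm

theorem IsLatticeFree.interior_nonempty (hm : 1 ≤ m) {K : Set (Euc m)} (hK : IsLatticeFree m K) :
    (interior K).Nonempty := by
  have := nontrivial_euc hm
  rw [← hK.2.1.setDim_eq_finrank_iff_interior_nonempty, finrank_euclideanSpace_fin]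
  exact hK.2.2.1

theorem IsMFree.interior_nonempty (hm : 1 ≤ m) {L : Set (Euc m × Euc n)} (hL : IsMFree m n L) :
    (interior L).Nonempty := by
  have := nontrivial_euc hm
  rw [← hL.2.1.setDim_eq_finrank_iff_interior_nonempty, finrank_euc_prod]
  exact hL.2.2.1

theorem IsLatticeFree.prod_univ (hm : 1 ≤ m) {K : Set (Euc m)} (hK : IsLatticeFree m K) :
    IsMFree m n (K ×ˢ univ) := by
  have hKint := hK.interior_nonempty hm
  obtain ⟨hcl, hconv, -, hfree⟩ := hK
  have hint : interior (K ×ˢ (univ : Set (Euc n))) = interior K ×ˢ univ := by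
    rw [interior_prod_eq, interior_univ]
  refine ⟨hcl.prod isClosed_univ, hconv.prod convex_univ, ?_, ?_⟩
  · have := nontrivial_euc hm
    rw [← finrank_euc_prod, (hconv.prod convex_univ).setDim_eq_finrank_iff_interior_nonempty, hint]
    exact hKint.prod univ_nonempty
  · rw [hint, eq_empty_iff_forall_notMem]
    rintro ⟨x, y⟩ ⟨⟨hx, -⟩, hxl⟩
    exact eq_empty_iff_forall_notMem.mp hfree x ⟨hx, hxl⟩

theorem IsMFree.isLatticeFree_closure_image_fst (hm : 1 ≤ m) {L : Set (Euc m × Euc n)}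
    (hL : IsMFree m n L) : IsLatticeFree m (closure (Prod.fst '' L)) := by
  have hint := hL.interior_nonempty hm
  obtain ⟨-, hconv, -, hfree⟩ := hL
  have hK := hconv.interior_closure_image_fst hint
  have hKconv : Convex ℝ (closure (Prod.fst '' L)) :=
    (hconv.linear_image (LinearMap.fst ℝ _ _)).closure
  refine ⟨isClosed_closure, hKconv, ?_, ?_⟩
  · have := nontrivial_euc hm
    have hdim := hKconv.setDim_eq_finrank_iff_interior_nonempty.mpr (hK ▸ hint.image _)
    rwa [finrank_euclideanSpace_fin] at hdim
  · rw [hK, eq_empty_iff_forall_notMem]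
    rintro _ ⟨⟨p, hp, rfl⟩, hpl⟩
    exact eq_empty_iff_forall_notMem.mp hfree p ⟨hp, hpl⟩

end

/-- Proposition: description of maximal 𝕄-free sets.
Let `𝕄 = ℤ^m × ℝ^n` (`m ≥ 1`, `n ≥ 0`) be a mixed-integer space in
`ℝ^d = ℝ^m × ℝ^n`. A set `P ⊆ ℝ^d` is maximal `𝕄`-free if and only if
`P = P' × ℝ^n` for a maximal lattice-free set `P'` in `ℝ^m`. -/
theorem stmt19 (m n : ℕ) (hm : 1 ≤ m) (P : Set (Euc m × Euc n)) :
    IsMaxMFree m n P ↔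
      ∃ P' : Set (Euc m), IsMaxLatticeFree m P' ∧ P = P' ×ˢ (univ : Set (Euc n)) := by
  simp only [isMaxMFree_iff_maximal, isMaxLatticeFree_iff_maximal]
  exact (prodUnivOrderEmbedding (Euc m) (Euc n)).maximal_iff_exists_maximal
    (fun L => closure (Prod.fst '' L)) (fun _ hK => hK.prod_univ hm)
    (fun _ hL => hL.isLatticeFree_closure_image_fst hm)
    (fun _ _ p hp => ⟨subset_closure (mem_image_of_mem _ hp), mem_univ _⟩)
end
end
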